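/- arXiv:1208.6451 — 9 statements merged into one kernel-verified Lean document; each statement's English description precedes it below -/
import Mathlib

section
/- For n ≥ 2 and any vector (x_1,…,x_{n-1},0) in {0,1}^n: if (x_1,…,x_{n-1},0) is the alternating vector ending (…,1,0,1,0) then Φ_n(x_1,…,x_{n-1},0) = (1,1,…,1); otherwise Φ_n(x_1,…,x_{n-1},0) = (Φ_{n-1}(x_1,…,x_{n-1}), 0). -/
/-! A vector ending in `0` is alternating on its whole length only if it is `altEnd0 n`; then
`m = n` and every entry becomes `1 - 0 = 1`. Otherwise `m ≤ n - 1`, and whether a prefix of length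
at most `n - 1` alternates depends only on the first `n - 1` entries, so `m` is the same for `x`
and for its truncation: `Φₙ` acts as `Φₙ₋₁` there and fixes the last entry. -/

/-- The prefix `(x₁,…,x_m)` (1-indexed) of `x ∈ {0,1}ⁿ` is alternating:
consecutive entries differ. -/
def AltPrefix (n : ℕ) (x : Fin n → Bool) (m : ℕ) : Prop :=
  ∀ j : ℕ, j + 1 < m → ∀ hn : j + 1 < n,
    x ⟨j, Nat.lt_of_succ_lt hn⟩ ≠ x ⟨j + 1, hn⟩

instance (n : ℕ) (x : Fin n → Bool) : DecidablePred (AltPrefix n x) := fun m =>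
  decidable_of_iff
    (∀ j ∈ Finset.range n, j + 1 < m → ∀ hn : j + 1 < n,
      x ⟨j, Nat.lt_of_succ_lt hn⟩ ≠ x ⟨j + 1, hn⟩)
    (by
      constructor
      · intro h j hj hn
        exact h j (Finset.mem_range.mpr (Nat.lt_of_succ_lt hn)) hj hn
      · intro h j _ hj hn
        exact h j hj hn)

/-- The largest `m ≤ n` such that the prefix `(x₁,…,x_m)` is alternating. -/
def mIdx (n : ℕ) (x : Fin n → Bool) : ℕ :=
  Nat.findGreatest (AltPrefix n x) n

/-- The map `Φₙ : {0,1}ⁿ → {0,1}ⁿ`: with `m` the largest index such that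
`(x₁,…,x_m)` is alternating, `yᵢ = 1 - x_m` for `i ≤ m` and `yᵢ = xᵢ` for `i > m`. -/
def Phi (n : ℕ) (x : Fin n → Bool) : Fin n → Bool :=
  fun i =>
    if _h : (i : ℕ) < mIdx n x then
      ! x ⟨mIdx n x - 1, by
        have h2 : mIdx n x ≤ n := Nat.findGreatest_le n
        omega⟩
    else x i

/-- The alternating vector `(…,1,0,1,0)`: `x_j = 1` iff `j ≢ n (mod 2)` (1-indexed). -/
def altEnd0 (n : ℕ) : Fin n → Bool := fun i => decide (((i : ℕ) + 1) % 2 ≠ n % 2)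

/-- The alternating vector `(…,0,1,0,1)`: `x_j = 1` iff `j ≡ n (mod 2)` (1-indexed). -/
def altEnd1 (n : ℕ) : Fin n → Bool := fun i => decide (((i : ℕ) + 1) % 2 = n % 2)

/-- The bit `c_j` (0-indexed `j`): XOR of consecutive bits `x_j, x_{j+1}`,
and for the last position the bit itself. -/
def cbit (n : ℕ) (x : Fin n → Bool) (j : Fin n) : Bool :=
  if h : (j : ℕ) + 1 < n then xor (x j) (x ⟨(j : ℕ) + 1, h⟩) else x j

/-- The map `rₙ(x) = Σ_{j=1}^n c_j 2^{j-1}`. -/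
def rmap (n : ℕ) (x : Fin n → Bool) : ℕ :=
  ∑ j : Fin n, (if cbit n x j then 1 else 0) * 2 ^ (j : ℕ)

/-- The recursively defined weights `w_{n,i,j}` (all indices 1-based; values for
indices outside `1 ≤ i, j ≤ n` are irrelevant junk). -/
def wgt : ℕ → ℕ → ℕ → ℤ
  | 0, _, _ => 0
  | 1, _, _ => -1
  | (n+2), i, j =>
    if i = n + 2 then
      (if j = n + 2 then (n : ℤ)
       else if j % 2 = (n + 2) % 2 then -1 else 1)
    else if i = n + 1 then
      (if j = n + 2 then -1
       else if j = n + 1 then wgt (n+1) (n+1) j + 1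
       else wgt (n+1) (n+1) j)
    else
      (if j = n + 2 then -1
       else if j = n + 1 then wgt (n+1) i j
       else wgt (n+1) i j + wgt n i j)

/-- The recursively defined thresholds `θ_{n,i}`. -/
def thr : ℕ → ℕ → ℤ
  | 0, _ => 0
  | 1, _ => 0
  | (n+2), i =>
    if i = n + 2 then (((n + 2) / 2 : ℕ) : ℤ)
    else if i = n + 1 then thr (n+1) (n+1)
    else thr (n+1) i + thr n i - 1

theorem altPrefix_altEnd0 (n m : ℕ) : AltPrefix n (altEnd0 n) m := by
  intro j _ hj
  simp only [altEnd0, ne_eq, decide_eq_decide]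
  omega

theorem altEnd0_last {n : ℕ} (hn : 0 < n) : altEnd0 n ⟨n - 1, by omega⟩ = false := by
  simp only [altEnd0, Nat.sub_add_cancel hn, ne_eq, not_true_eq_false, decide_false]

theorem eq_of_altPrefix_of_last_eq {n : ℕ} (hn : 0 < n) {x y : Fin n → Bool}
    (hx : AltPrefix n x n) (hy : AltPrefix n y n)
    (hlast : x ⟨n - 1, by omega⟩ = y ⟨n - 1, by omega⟩) : x = y := by
  funext ⟨i, hi⟩
  induction hd : n - 1 - i generalizing i with
  | zero =>
    obtain rfl : i = n - 1 := by omega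
    exact hlast
  | succ d ih =>
    rw [Bool.eq_not_iff.mpr (hx i (by omega) (by omega)),
      Bool.eq_not_iff.mpr (hy i (by omega) (by omega)), ih (i + 1) (by omega) (by omega)]

theorem altPrefix_castLE_iff {k n : ℕ} (h : k ≤ n) (x : Fin n → Bool) {m : ℕ} (hm : m ≤ k) :
    AltPrefix k (fun j => x (Fin.castLE h j)) m ↔ AltPrefix n x m :=
  ⟨fun hx j hj _ => hx j hj (by omega), fun hx j hj _ => hx j hj (by omega)⟩

theorem mIdx_eq_self_iff {n : ℕ} (x : Fin n → Bool) : mIdx n x = n ↔ AltPrefix n x n := by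
  refine ⟨fun h => ?_, Nat.findGreatest_eq⟩
  rcases Nat.eq_zero_or_pos n with rfl | hn
  · intro j hj
    omega
  · exact Nat.findGreatest_of_ne_zero h hn.ne'

theorem mIdx_castLE {k n : ℕ} (h : k ≤ n) (x : Fin n → Bool) (hx : mIdx n x ≤ k) :
    mIdx k (fun j => x (Fin.castLE h j)) = mIdx n x := by
  refine Nat.findGreatest_eq_iff.mpr ⟨hx, fun h0 => ?_, fun m hlt hm => ?_⟩
  · exact (altPrefix_castLE_iff h x hx).mpr (Nat.findGreatest_of_ne_zero rfl h0)
  · rw [altPrefix_castLE_iff h x hm]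
    exact Nat.findGreatest_is_greatest hlt (hm.trans h)

theorem Phi_of_mIdx_le {n : ℕ} (x : Fin n → Bool) (i : Fin n) (hi : mIdx n x ≤ i) :
    Phi n x i = x i :=
  dif_neg hi.not_gt

theorem Phi_castLE {k n : ℕ} (h : k ≤ n) (x : Fin n → Bool) (hx : mIdx n x ≤ k) (i : Fin k) :
    Phi n x (Fin.castLE h i) = Phi k (fun j => x (Fin.castLE h j)) i := by
  simp only [Phi, mIdx_castLE h x hx]
  rfl

theorem Phi_altEnd0 (n : ℕ) : Phi n (altEnd0 n) = fun _ => true := by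
  have hm : mIdx n (altEnd0 n) = n := (mIdx_eq_self_iff _).mpr (altPrefix_altEnd0 n n)
  funext i
  simp only [Phi, hm, dif_pos i.isLt, altEnd0_last i.pos, Bool.not_false]

/-- For `n ≥ 2` and a vector ending in `0`: if it is the alternating vector
`(…,1,0,1,0)` then `Φₙ` sends it to `(1,…,1)`; otherwise `Φₙ` acts as
`(Φ_{n-1}(x₁,…,x_{n-1}), 0)`. -/
theorem Phi_last_zero (n : ℕ) (hn : 2 ≤ n) (x : Fin n → Bool)
    (hlast : x ⟨n - 1, by omega⟩ = false) :
    (x = altEnd0 n → Phi n x = fun _ => true) ∧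
    (x ≠ altEnd0 n →
      (∀ i : Fin (n - 1),
        Phi n x (Fin.castLE (by omega) i) =
          Phi (n - 1) (fun j : Fin (n - 1) => x (Fin.castLE (by omega) j)) i) ∧
      Phi n x ⟨n - 1, by omega⟩ = false) := by
  refine ⟨fun hx => hx ▸ Phi_altEnd0 n, fun hx => ?_⟩
  have hnot : ¬AltPrefix n x n := fun halt =>
    hx <| eq_of_altPrefix_of_last_eq (by omega) halt (altPrefix_altEnd0 n n) <|
      hlast.trans (altEnd0_last (by omega)).symm
  have hm : mIdx n x ≤ n - 1 := by
    have hle : mIdx n x ≤ n := Nat.findGreatest_le n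
    have hne : mIdx n x ≠ n := (mIdx_eq_self_iff x).not.mpr hnot
    omega
  exact ⟨Phi_castLE _ x hm, (Phi_of_mIdx_le x _ hm).trans hlast⟩
end

section
/- The 2^n vectors Φ_n^t(0,0,…,0), for t = 0, 1, …, 2^n − 1, are pairwise distinct. -/
/-! The bits `cⱼ` of `rmap` are the differences of consecutive entries, so `Φₙ` flips exactly
`c₀, …, c_{m-1}`, where `c₀ = ⋯ = c_{m-2} = 1` and `c_{m-1} = 0` unless `m = n`: this is binary
increment modulo `2ⁿ`. Hence `rmap (Φₙᵗ 0) = t mod 2ⁿ`, which separates `t < 2ⁿ`. -/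

open Finset

section BinaryIncrement

def bitsValue (n : ℕ) (b : ℕ → Bool) : ℕ :=
  ∑ j ∈ range n, (b j).toNat * 2 ^ j

lemma bitsValue_succ (n : ℕ) (b : ℕ → Bool) :
    bitsValue (n + 1) b = bitsValue n b + (b n).toNat * 2 ^ n :=
  sum_range_succ _ _

lemma bitsValue_lt (n : ℕ) (b : ℕ → Bool) : bitsValue n b < 2 ^ n := by
  induction n with
  | zero => simp [bitsValue]
  | succ n ih =>
    rw [bitsValue_succ, pow_succ]
    have := Bool.toNat_le (b n)
    nlinarith

lemma bitsValue_true_add_one (n : ℕ) : bitsValue n (fun _ => true) + 1 = 2 ^ n := by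
  induction n with
  | zero => rfl
  | succ n ih =>
    rw [bitsValue_succ, pow_succ]
    simp only [Bool.toNat_true]
    omega

lemma bitsValue_congr {n : ℕ} {b b' : ℕ → Bool} (h : ∀ j < n, b j = b' j) :
    bitsValue n b = bitsValue n b' :=
  sum_congr rfl fun j hj => by rw [h j (mem_range.mp hj)]

lemma bitsValue_flip_add (b : ℕ → Bool) {k n : ℕ} (hk : k < n) (hones : ∀ j < k, b j = true) :
    bitsValue n (fun j => if j ≤ k then !b j else b j) + (b k).toNat * 2 ^ (k + 1)
      = bitsValue n b + 1 := by
  induction n, hk using Nat.le_induction with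
  | base =>
    have hlow : bitsValue k (fun j => if j ≤ k then !b j else b j) = 0 := by
      simp +contextual [bitsValue, hones, le_of_lt]
    have hhigh : bitsValue k b + 1 = 2 ^ k := by
      rw [← bitsValue_true_add_one, bitsValue_congr hones]
    rw [bitsValue_succ, bitsValue_succ, hlow, if_pos le_rfl, pow_succ]
    cases b k <;>
      simp only [Bool.not_false, Bool.not_true, Bool.toNat_true, Bool.toNat_false] <;> omega
  | succ n hkn ih =>
    rw [bitsValue_succ, bitsValue_succ, if_neg (by omega)]
    omega

lemma bitsValue_flip (b : ℕ → Bool) {k n : ℕ} (hk : k < n) (hones : ∀ j < k, b j = true)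
    (hcarry : b k = false ∨ k + 1 = n) :
    bitsValue n (fun j => if j ≤ k then !b j else b j) = (bitsValue n b + 1) % 2 ^ n := by
  rw [← bitsValue_flip_add b hk hones]
  rcases hcarry with hbk | rfl
  · rw [hbk, Bool.toNat_false, zero_mul, add_zero, Nat.mod_eq_of_lt (bitsValue_lt _ _)]
  · rw [Nat.add_mul_mod_self_right, Nat.mod_eq_of_lt (bitsValue_lt _ _)]

end BinaryIncrement

section Phi

variable {n : ℕ} (x : Fin n → Bool)

lemma mIdx_le : mIdx n x ≤ n := Nat.findGreatest_le n

lemma altPrefix_zero : AltPrefix n x 0 := fun _ hj => absurd hj (by omega)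

lemma mIdx_pos (hn : 0 < n) : 0 < mIdx n x :=
  Nat.le_findGreatest hn fun _ hj => absurd hj (by omega)

lemma altPrefix_mIdx : AltPrefix n x (mIdx n x) :=
  Nat.findGreatest_spec (Nat.zero_le n) (altPrefix_zero x)

def cbitSeq (j : ℕ) : Bool := if h : j < n then cbit n x ⟨j, h⟩ else false

lemma rmap_eq_bitsValue : rmap n x = bitsValue n (cbitSeq x) := by
  rw [rmap, bitsValue, ← Fin.sum_univ_eq_sum_range]
  refine sum_congr rfl fun j _ => ?_
  rw [cbitSeq, dif_pos j.isLt]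
  cases cbit n x j <;> rfl

lemma cbit_of_succ_lt_mIdx (j : Fin n) (hj : (j : ℕ) + 1 < mIdx n x) : cbit n x j = true := by
  have hjn : (j : ℕ) + 1 < n := hj.trans_le (mIdx_le x)
  have hne := altPrefix_mIdx x j hj hjn
  rw [cbit, dif_pos hjn]
  revert hne
  cases x j <;> cases x ⟨(j : ℕ) + 1, hjn⟩ <;> decide

lemma cbit_pred_mIdx {k : ℕ} (hk : mIdx n x = k + 1) (hmn : mIdx n x < n) :
    cbit n x ⟨k, by omega⟩ = false := by
  have hmax : ¬ AltPrefix n x (mIdx n x + 1) :=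
    Nat.findGreatest_is_greatest (Nat.lt_succ_self _) hmn
  simp only [AltPrefix, not_forall, not_not] at hmax
  obtain ⟨j, hj, hjn, heq⟩ := hmax
  obtain rfl : j = k := by
    by_contra hjk
    exact altPrefix_mIdx x j (by omega) hjn heq
  rw [cbit, dif_pos hjn, heq, Bool.xor_self]

lemma cbit_Phi (j : Fin n) :
    cbit n (Phi n x) j = if (j : ℕ) < mIdx n x then !cbit n x j else cbit n x j := by
  have hm := mIdx_le x
  by_cases hj : (j : ℕ) < mIdx n x
  · rw [if_pos hj]
    rcases (by omega : (j : ℕ) + 1 = mIdx n x ∨ (j : ℕ) + 1 < mIdx n x) with hlast | hlt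
    · have hidx : (⟨mIdx n x - 1, by omega⟩ : Fin n) = j := Fin.ext (by simp only; omega)
      have hPj : Phi n x j = !x j := by simp only [Phi, dif_pos hj, hidx]
      unfold cbit
      split_ifs with hjn
      · have hPnext : Phi n x ⟨(j : ℕ) + 1, hjn⟩ = x ⟨(j : ℕ) + 1, hjn⟩ := by
          simp only [Phi, dif_neg (show ¬ (j : ℕ) + 1 < mIdx n x by omega)]
        rw [hPj, hPnext, Bool.not_xor]
      · exact hPj
    · rw [cbit_of_succ_lt_mIdx x j hlt]
      have hjn : (j : ℕ) + 1 < n := by omega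
      simp only [cbit, Phi, dif_pos hjn, dif_pos hj, dif_pos hlt]
      simp
  · simp only [if_neg hj, cbit, Phi, dif_neg hj]
    split_ifs <;> first | rfl | omega

lemma rmap_Phi : rmap n (Phi n x) = (rmap n x + 1) % 2 ^ n := by
  rcases Nat.eq_zero_or_pos n with rfl | hn
  · simp [rmap]
  obtain ⟨k, hk⟩ : ∃ k, mIdx n x = k + 1 := Nat.exists_eq_add_one.mpr (mIdx_pos x hn)
  have hkn : k < n := by have := mIdx_le x; omega
  have hflip : cbitSeq (Phi n x) = fun j => if j ≤ k then !cbitSeq x j else cbitSeq x j := by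
    funext j
    by_cases hj : j < n
    · simp only [cbitSeq, dif_pos hj, cbit_Phi, hk, Nat.lt_succ_iff]
    · simp only [cbitSeq, dif_neg hj]; rw [if_neg (by omega)]
  have hones : ∀ j < k, cbitSeq x j = true := fun j hj => by
    rw [cbitSeq, dif_pos (by omega), cbit_of_succ_lt_mIdx x _ (by simp only; omega)]
  have hcarry : cbitSeq x k = false ∨ k + 1 = n := by
    by_cases hmn : mIdx n x < n
    · left; rw [cbitSeq, dif_pos hkn, cbit_pred_mIdx x hk hmn]
    · right; have := mIdx_le x; omega
  rw [rmap_eq_bitsValue, rmap_eq_bitsValue, hflip, bitsValue_flip _ hkn hones hcarry]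

end Phi

lemma rmap_Phi_iterate (n t : ℕ) : rmap n ((Phi n)^[t] fun _ => false) = t % 2 ^ n := by
  induction t with
  | zero => simp [rmap, cbit]
  | succ t ih => rw [Function.iterate_succ_apply', rmap_Phi, ih, Nat.mod_add_mod]

theorem Phi_orbit_distinct_general (n : ℕ) :
    ∀ s t : ℕ, s < 2 ^ n → t < 2 ^ n →
      (Phi n)^[s] (fun _ => false) = (Phi n)^[t] (fun _ => false) → s = t := by
  intro s t hs ht h
  have := congrArg (rmap n) h
  rwa [rmap_Phi_iterate, rmap_Phi_iterate, Nat.mod_eq_of_lt hs, Nat.mod_eq_of_lt ht] at this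

/-- The `2ⁿ` vectors `Φₙᵗ(0,…,0)`, `t = 0,…,2ⁿ-1`, are pairwise distinct. -/
theorem Phi_orbit_distinct (n : ℕ) (hn : 0 < n) :
    ∀ s t : ℕ, s < 2 ^ n → t < 2 ^ n →
      (Phi n)^[s] (fun _ => false) = (Phi n)^[t] (fun _ => false) → s = t :=
  Phi_orbit_distinct_general n
end

section
/- Φ_n^{2^n - 1}(0,0,…,0) is the alternating vector (…,0,1,0,1), i.e. the vector x with x_i = 1 exactly when n - i is even (so x_n = 1, x_{n-1} = 0, etc.), and consequently Φ_n^{2^n}(0,…,0) = (0,…,0). -/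
def suffixParity (n k i : ℕ) : Bool :=
  decide (Odd (∑ j ∈ Finset.Ico i n, (k.testBit j).toNat))

def grayDecode (n k : ℕ) : Fin n → Bool := fun i => suffixParity n k i

section

variable {n k i : ℕ}

theorem suffixParity_eq_xor (h : i < n) :
    suffixParity n k i = xor (k.testBit i) (suffixParity n k (i + 1)) := by
  unfold suffixParity
  rw [Finset.sum_eq_sum_Ico_succ_bot h]
  cases k.testBit i <;> simp [Nat.odd_add_one, add_comm 1, -Nat.not_odd_iff_even]

theorem suffixParity_congr {a b : ℕ} (h : ∀ j, i ≤ j → j < n → a.testBit j = b.testBit j) :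
    suffixParity n a i = suffixParity n b i := by
  unfold suffixParity
  rw [Finset.sum_congr rfl fun j hj => by rw [h j (Finset.mem_Ico.1 hj).1 (Finset.mem_Ico.1 hj).2]]

theorem suffixParity_eq_of_testBit_eq_false {t : ℕ} (hit : i ≤ t) (htn : t ≤ n)
    (h : ∀ j, i ≤ j → j < t → k.testBit j = false) : suffixParity n k i = suffixParity n k t := by
  unfold suffixParity
  rw [← Finset.sum_Ico_consecutive _ hit htn, Finset.sum_eq_zero, zero_add]
  intro j hj
  simp [h j (Finset.mem_Ico.1 hj).1 (Finset.mem_Ico.1 hj).2]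

theorem suffixParity_zero : suffixParity n 0 i = false := by
  simp [suffixParity]

theorem suffixParity_two_pow_sub_one : suffixParity n (2 ^ n - 1) i = decide (Odd (n - i)) := by
  unfold suffixParity
  rw [Finset.sum_congr rfl fun j hj => by
    rw [Nat.testBit_two_pow_sub_one, decide_eq_true (Finset.mem_Ico.1 hj).2]]
  simp

theorem grayDecode_zero : grayDecode n 0 = fun _ => false := by
  funext i
  exact suffixParity_zero

theorem grayDecode_two_pow_sub_one : grayDecode n (2 ^ n - 1) = altEnd1 n := by
  funext i
  simp only [grayDecode, altEnd1, suffixParity_two_pow_sub_one, decide_eq_decide]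
  have := i.isLt
  rw [Nat.odd_iff]
  omega

theorem grayDecode_ne_iff (j : ℕ) (h : j + 1 < n) :
    grayDecode n k ⟨j, by omega⟩ ≠ grayDecode n k ⟨j + 1, h⟩ ↔ k.testBit j := by
  simp only [grayDecode, suffixParity_eq_xor (Nat.lt_of_succ_lt h)]
  cases k.testBit j <;> simp

theorem altPrefix_grayDecode_iff {m : ℕ} :
    AltPrefix n (grayDecode n k) m ↔ ∀ j, j + 1 < m → j + 1 < n → k.testBit j := by
  exact forall_congr' fun j => imp_congr_right fun _ => forall_congr' fun h => grayDecode_ne_iff j h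

theorem mIdx_grayDecode {t : ℕ} (ht : t < n) (hlow : ∀ j < t, k.testBit j)
    (hbit : k.testBit t = false) :
    mIdx n (grayDecode n k) = t + 1 := by
  rw [mIdx, Nat.findGreatest_eq_iff]
  refine ⟨ht, fun _ => altPrefix_grayDecode_iff.2 fun j hj _ => hlow j (by omega),
    fun m hm hmn halt => ?_⟩
  simpa [hbit] using altPrefix_grayDecode_iff.1 halt t hm (by omega)

/-- `2 ^ (t + 1) * q + (2 ^ t - 1)` is the general number whose binary expansion ends in exactly
`t` ones; adding one clears them and sets bit `t`. -/
theorem Phi_grayDecode_carry {t q : ℕ} (ht : t < n) :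
    Phi n (grayDecode n (2 ^ (t + 1) * q + (2 ^ t - 1))) =
      grayDecode n (2 ^ (t + 1) * q + 2 ^ t) := by
  set k := 2 ^ (t + 1) * q + (2 ^ t - 1)
  set k' := 2 ^ (t + 1) * q + 2 ^ t
  have hpow : 2 ^ t < 2 ^ (t + 1) := Nat.pow_lt_pow_succ one_lt_two
  have hk (j : ℕ) :
      k.testBit j = if j < t + 1 then decide (j < t) else q.testBit (j - (t + 1)) := by
    rw [Nat.testBit_two_pow_mul_add q (by omega), Nat.testBit_two_pow_sub_one]
  have hk' (j : ℕ) :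
      k'.testBit j = if j < t + 1 then decide (t = j) else q.testBit (j - (t + 1)) := by
    rw [Nat.testBit_two_pow_mul_add q hpow, Nat.testBit_two_pow]
  have high (j : ℕ) (hj : t < j) : k'.testBit j = k.testBit j := by
    simp [hk, hk', show ¬ j < t + 1 by omega]
  have hm : mIdx n (grayDecode n k) = t + 1 :=
    mIdx_grayDecode ht (fun j hj => by simp [hk, hj, Nat.lt_succ_of_lt hj]) (by simp [hk])
  funext i
  simp only [Phi, hm]
  split_ifs with hi
  · simp only [grayDecode, Nat.add_sub_cancel]
    rw [suffixParity_eq_of_testBit_eq_false (k := k') (by omega) ht.le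
      (fun j _ hj => by simp [hk', hj.ne', Nat.lt_succ_of_lt hj]),
      suffixParity_eq_xor ht, suffixParity_eq_xor (k := k') ht,
      suffixParity_congr (a := k') (b := k) fun j hj _ => high j hj]
    simp [hk, hk']
  · exact suffixParity_congr fun j hj _ => (high j (by omega)).symm

theorem Phi_grayDecode (hk : k + 1 < 2 ^ n) : Phi n (grayDecode n k) = grayDecode n (k + 1) := by
  obtain ⟨t, m, ⟨q, rfl⟩, hkt⟩ := Nat.exists_eq_two_pow_mul_odd k.succ_ne_zero
  have hsplit : 2 ^ t * (2 * q + 1) = 2 ^ (t + 1) * q + 2 ^ t := by ring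
  have hpos : 0 < 2 ^ t := Nat.two_pow_pos t
  have ht : t < n := (Nat.pow_lt_pow_iff_right one_lt_two).1 (by nlinarith)
  rw [show k = 2 ^ (t + 1) * q + (2 ^ t - 1) by omega, Phi_grayDecode_carry ht]
  congr 1
  omega

theorem iterate_Phi_const_false (hk : k < 2 ^ n) :
    (Phi n)^[k] (fun _ => false) = grayDecode n k := by
  induction k with
  | zero => exact grayDecode_zero.symm
  | succ k ih => rw [Function.iterate_succ_apply', ih (by omega), Phi_grayDecode hk]

theorem Phi_altEnd1 : Phi n (altEnd1 n) = fun _ => false := by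
  funext i
  have hn : 0 < n := i.pos
  have halt : AltPrefix n (altEnd1 n) n := fun j _ hj => by
    simp only [altEnd1, ne_eq, decide_eq_decide]
    omega
  simp only [Phi, mIdx, Nat.findGreatest_eq halt, i.isLt, dite_true]
  simp [altEnd1, Nat.sub_add_cancel hn]

end

theorem Phi_orbit_last_general (n : ℕ) :
    (Phi n)^[2 ^ n - 1] (fun _ => false) = altEnd1 n ∧
    (Phi n)^[2 ^ n] (fun _ => false) = fun _ => false := by
  have hlast : (Phi n)^[2 ^ n - 1] (fun _ => false) = altEnd1 n := by
    rw [iterate_Phi_const_false (by simp), grayDecode_two_pow_sub_one]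
  refine ⟨hlast, ?_⟩
  rw [← Nat.sub_add_cancel Nat.one_le_two_pow, Function.iterate_succ_apply', hlast, Phi_altEnd1]

/-- `Φₙ^{2ⁿ-1}(0,…,0)` is the alternating vector `(…,0,1,0,1)`, and consequently
`Φₙ^{2ⁿ}(0,…,0) = (0,…,0)`. -/
theorem Phi_orbit_last (n : ℕ) (hn : 0 < n) :
    (Phi n)^[2 ^ n - 1] (fun _ => false) = altEnd1 n ∧
    (Phi n)^[2 ^ n] (fun _ => false) = fun _ => false :=
  Phi_orbit_last_general n
end

section
/- For every positive integer n there exist real weights w_{i,j} (1 ≤ i,j ≤ n) and thresholds θ_i such that Φ_n(x)_i = 1 if and only if Σ_{j=1}^n w_{i,j} x_j ≥ θ_i, for all x ∈ {0,1}^n and all i; i.e., each coordinate of Φ_n is a linear threshold function. -/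
/-!
Coordinate `i` of `Φₙ(x)` is `¬x_e`, where `e` ends the maximal alternating run starting at `i`,
when `x₀ … x_i` alternate, and `x_i` otherwise. Both cases come from one gadget: if an affine form
`L` of the bits vanishes exactly where a second form `R` decides the output by its sign, and is
otherwise `≥ 1` or `≤ -1` according to the output, then `L + c • R` decides the output for small
`c > 0`, since `R` is bounded on the finite cube. For the run end, `L = 1 - x_p - x_{p+1}` with
the run from `p + 1` as fallback; for the prefix, `L = Σ_{s<i} (x_i - y_s)` with `y_s` equal to
`x_s` flipped when `i - s` is odd, which vanishes on alternating prefixes and otherwise counts the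
defects `y_s ≠ x_i` with the sign of `x_i`.
-/

open Finset

section AffineForms

variable (ι : Type*)

def affineForms : Submodule ℝ ((ι → Bool) → ℝ) :=
  Submodule.span ℝ (Set.range fun (j : Option ι) (x : ι → Bool) =>
    j.elim 1 fun j => if x j then 1 else 0)

variable {ι}

lemma const_mem_affineForms (c : ℝ) : (fun _ => c : (ι → Bool) → ℝ) ∈ affineForms ι := by
  have h : (1 : (ι → Bool) → ℝ) ∈ affineForms ι := Submodule.subset_span ⟨none, rfl⟩
  convert Submodule.smul_mem _ c h using 1
  funext
  simp

lemma bit_mem_affineForms (j : ι) :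
    (fun x : ι → Bool => if x j then (1 : ℝ) else 0) ∈ affineForms ι :=
  Submodule.subset_span ⟨some j, rfl⟩

lemma exists_eq_of_mem_affineForms [Fintype ι] {L : (ι → Bool) → ℝ} (hL : L ∈ affineForms ι) :
    ∃ (w : ι → ℝ) (c : ℝ), ∀ x, L x = ∑ j, w j * (if x j then 1 else 0) + c := by
  obtain ⟨a, rfl⟩ := (Submodule.mem_span_range_iff_exists_fun ℝ).1 hL
  refine ⟨fun j => a (some j), a none, fun x => ?_⟩
  simp [Fintype.sum_option, add_comm]

def Selects (l r : ℝ) (b : Prop) : Prop :=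
  (l = 0 ∧ (b ↔ 0 ≤ r)) ∨ (1 ≤ l ∧ b) ∨ (l ≤ -1 ∧ ¬b)

lemma Selects.iff_nonneg_add_mul {l r c : ℝ} {b : Prop} (h : Selects l r b) (hc : 0 < c)
    (hcr : c * |r| < 1) : b ↔ 0 ≤ l + c * r := by
  have hbound := abs_lt.1 (show |c * r| < 1 by rwa [abs_mul, abs_of_pos hc])
  rcases h with ⟨rfl, hb⟩ | ⟨hl, hb⟩ | ⟨hl, hb⟩
  · rw [hb, zero_add, mul_nonneg_iff_of_pos_left hc]
  · exact iff_of_true hb (by linarith)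
  · exact iff_of_false hb (by linarith)

lemma exists_mem_affineForms_of_selects [Finite ι] {L R : (ι → Bool) → ℝ} (hL : L ∈ affineForms ι)
    (hR : R ∈ affineForms ι) :
    ∃ S ∈ affineForms ι, ∀ x (b : Prop), Selects (L x) (R x) b → (b ↔ 0 ≤ S x) := by
  obtain ⟨B, hB⟩ := (Set.finite_range fun y => |R y|).bddAbove
  refine ⟨L + (B + 1)⁻¹ • R, add_mem hL (Submodule.smul_mem _ _ hR), fun x b h => ?_⟩
  have hRx : |R x| ≤ B := hB ⟨x, rfl⟩
  have hB1 : 0 < B + 1 := by linarith [abs_nonneg (R x)]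
  refine h.iff_nonneg_add_mul (inv_pos.2 hB1) ?_
  rw [inv_mul_lt_iff₀ hB1, mul_one]
  linarith

end AffineForms

section Words

variable {n : ℕ}

def word (x : Fin n → Bool) (t : ℕ) : Bool := if h : t < n then x ⟨t, h⟩ else false

def bitAt (x : Fin n → Bool) (t : ℕ) : ℝ := if word x t then 1 else 0

lemma word_coe (x : Fin n → Bool) (i : Fin n) : word x i = x i := by
  simp [word]

lemma bitAt_mem_affineForms (t : ℕ) : (fun x => bitAt x t) ∈ affineForms (Fin n) := by
  by_cases ht : t < n
  · convert bit_mem_affineForms (⟨t, ht⟩ : Fin n) using 2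
    simp [bitAt, word, ht]
  · convert const_mem_affineForms (ι := Fin n) 0 using 2
    simp [bitAt, word, ht]

end Words

section AlternatingRuns

def IsAltOn (u : ℕ → Bool) (a b : ℕ) : Prop := ∀ t, a ≤ t → t < b → u t ≠ u (t + 1)

/-- `[a, e]` is a maximal alternating run of `u` inside `[0, n)` starting at `a`. -/
def IsMaxAltRun (u : ℕ → Bool) (n a e : ℕ) : Prop :=
  a ≤ e ∧ e < n ∧ IsAltOn u a e ∧ (e + 1 < n → u e = u (e + 1))

variable {u : ℕ → Bool} {n a e : ℕ}

lemma IsMaxAltRun.mono (h : IsMaxAltRun u n a e) {b : ℕ} (hab : a ≤ b) (hbe : b ≤ e) :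
    IsMaxAltRun u n b e :=
  ⟨hbe, h.2.1, fun t hbt hte => h.2.2.1 t (hab.trans hbt) hte, h.2.2.2⟩

lemma IsMaxAltRun.isAltOn (h : IsMaxAltRun u n a e) {i : ℕ} (hie : i ≤ e) : IsAltOn u a i :=
  fun t hat hti => h.2.2.1 t hat (by omega)

lemma IsMaxAltRun.not_isAltOn (h : IsMaxAltRun u n a e) {i : ℕ} (hei : e < i) (hin : i < n) :
    ¬IsAltOn u a i :=
  fun halt => halt e h.1 hei (h.2.2.2 (by omega))

lemma isAltOn_zero_iff (u : ℕ → Bool) (i : ℕ) :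
    IsAltOn u 0 i ↔ ∀ s < i, (u s = u i ↔ Even (i - s)) := by
  constructor
  · intro halt
    have hpat : ∀ k ≤ i, (u (i - k) = u i ↔ Even k) := by
      intro k
      induction k with
      | zero => simp
      | succ k ih =>
        intro hk
        have hne := halt (i - (k + 1)) (Nat.zero_le _) (by omega)
        rw [show i - (k + 1) + 1 = i - k by omega] at hne
        rw [Nat.even_add_one, ← ih (by omega)]
        revert hne; cases u (i - (k + 1)) <;> cases u (i - k) <;> simp
    intro s hs
    simpa [Nat.sub_sub_self hs.le] using hpat (i - s) (by omega)
  · intro hpat t _ hti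
    have h1 := hpat t hti
    have h2 : u (t + 1) = u i ↔ Even (i - (t + 1)) := by
      rcases Nat.lt_or_ge (t + 1) i with h | h
      · exact hpat _ h
      · simp [show t + 1 = i by omega]
    rw [show i - t = i - (t + 1) + 1 by omega, Nat.even_add_one, ← h2] at h1
    intro heq
    rw [heq] at h1
    exact iff_not_self h1

end AlternatingRuns

section ThresholdForms

variable {n : ℕ}

lemma exists_mem_affineForms_runEnd (p : ℕ) (hp : p < n) :
    ∃ R ∈ affineForms (Fin n), ∀ x e, IsMaxAltRun (word x) n p e →
      (word x e = false ↔ 0 ≤ R x) := by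
  obtain ⟨d, hd⟩ : ∃ d, p + d + 1 = n := ⟨n - p - 1, by omega⟩
  induction d generalizing p with
  | zero =>
    refine ⟨fun x => -bitAt x p, neg_mem (bitAt_mem_affineForms p), fun x e he => ?_⟩
    obtain rfl : e = p := by have := he.1; have := he.2.1; omega
    cases h : word x e <;> simp [bitAt, h]
  | succ d ih =>
    obtain ⟨R, hR, hRrun⟩ := ih (p + 1) (by omega) (by omega)
    have hL : (fun x => 1 - bitAt x p - bitAt x (p + 1)) ∈ affineForms (Fin n) :=
      sub_mem (sub_mem (const_mem_affineForms 1) (bitAt_mem_affineForms p))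
        (bitAt_mem_affineForms (p + 1))
    obtain ⟨S, hS, hSsel⟩ := exists_mem_affineForms_of_selects hL hR
    refine ⟨S, hS, fun x e he => hSsel x _ ?_⟩
    by_cases hpp : word x p = word x (p + 1)
    · -- the run stops at once, and the two equal bits give `L = ±1`
      obtain rfl : e = p := by
        by_contra hne
        exact he.2.2.1 p le_rfl (by have := he.1; omega) hpp
      right
      cases h : word x e <;> simp [bitAt, h, ← hpp]
    · have hep : p + 1 ≤ e := by
        by_contra hlt
        obtain rfl : e = p := by have := he.1; omega
        exact hpp (he.2.2.2 (by omega))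
      left
      refine ⟨?_, hRrun x e (he.mono (Nat.le_succ p) hep)⟩
      cases h : word x p <;> cases h' : word x (p + 1) <;> simp [bitAt, h, h'] at hpp ⊢

lemma exists_mem_affineForms_prefix (i : ℕ) :
    ∃ L ∈ affineForms (Fin n), ∀ x r (b : Prop),
      (IsAltOn (word x) 0 i → (b ↔ 0 ≤ r)) → (¬IsAltOn (word x) 0 i → (b ↔ word x i = true)) →
        Selects (L x) r b := by
  let term (x : Fin n → Bool) (s : ℕ) : ℝ :=
    if Even (i - s) then bitAt x i - bitAt x s else bitAt x i + bitAt x s - 1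
  have hterm : ∀ x s, term x s =
      if (word x s = word x i ↔ Even (i - s)) then 0 else if word x i then 1 else -1 := by
    intro x s
    by_cases he : Even (i - s) <;> cases h : word x s <;> cases h' : word x i <;>
      simp [term, bitAt, he, h, h']
  refine ⟨∑ s ∈ range i, fun x => term x s, sum_mem fun s _ => ?_, fun x r b halt hnalt => ?_⟩
  · have hi := bitAt_mem_affineForms (n := n) i
    have hs := bitAt_mem_affineForms (n := n) s
    by_cases he : Even (i - s)
    · simp only [term, he, if_true]
      exact sub_mem hi hs
    · simp only [term, he, if_false]
      exact sub_mem (add_mem hi hs) (const_mem_affineForms 1)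
  have hcount : ∑ s ∈ range i, term x s = (if word x i then 1 else -1) *
      #{s ∈ range i | ¬(word x s = word x i ↔ Even (i - s))} := by
    rw [sum_congr rfl fun s _ => hterm x s, sum_ite, sum_const_zero, zero_add, sum_const,
      nsmul_eq_mul, mul_comm]
  rw [Finset.sum_apply, hcount]
  by_cases h : IsAltOn (word x) 0 i
  · refine Or.inl ⟨?_, halt h⟩
    have hempty : {s ∈ range i | ¬(word x s = word x i ↔ Even (i - s))} = ∅ :=
      filter_eq_empty_iff.2 fun s hs => not_not.2 ((isAltOn_zero_iff _ i).1 h s (mem_range.1 hs))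
    simp [hempty]
  · obtain ⟨s, hs, hdef⟩ : ∃ s < i, ¬(word x s = word x i ↔ Even (i - s)) := by
      simpa [isAltOn_zero_iff] using h
    have hpos : (1 : ℝ) ≤ #{s ∈ range i | ¬(word x s = word x i ↔ Even (i - s))} := by
      exact_mod_cast card_pos.2 ⟨s, mem_filter.2 ⟨mem_range.2 hs, hdef⟩⟩
    rw [hnalt h]
    right
    cases hxi : word x i <;> rw [hxi] at hpos
    · exact Or.inr ⟨by simp only [Bool.false_eq_true, if_false]; linarith, by simp⟩
    · exact Or.inl ⟨by simpa using hpos, rfl⟩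

end ThresholdForms

section Phi

variable {n : ℕ}

lemma altPrefix_one (x : Fin n → Bool) : AltPrefix n x 1 := fun j hj _ => by omega

lemma one_le_mIdx (hn : 0 < n) (x : Fin n → Bool) : 1 ≤ mIdx n x :=
  Nat.le_findGreatest hn (altPrefix_one x)

lemma isMaxAltRun_mIdx (hn : 0 < n) (x : Fin n → Bool) :
    IsMaxAltRun (word x) n 0 (mIdx n x - 1) := by
  have hpos := one_le_mIdx hn x
  have hle : mIdx n x ≤ n := Nat.findGreatest_le n
  have halt : AltPrefix n x (mIdx n x) := Nat.findGreatest_spec hn (altPrefix_one x)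
  have hword : ∀ t (ht : t + 1 < n),
      word x t = x ⟨t, by omega⟩ ∧ word x (t + 1) = x ⟨t + 1, ht⟩ :=
    fun t ht => ⟨dif_pos _, dif_pos ht⟩
  refine ⟨Nat.zero_le _, by omega, fun t _ ht => ?_, fun hM => ?_⟩
  · rw [(hword t (by omega)).1, (hword t (by omega)).2]
    exact halt t (by omega) _
  · have hnext : ¬AltPrefix n x (mIdx n x + 1) :=
      Nat.findGreatest_is_greatest (Nat.lt_succ_self _) (by omega)
    simp only [AltPrefix, not_forall, not_not] at hnext
    obtain ⟨j, hj, hjn, hjeq⟩ := hnext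
    obtain rfl : j = mIdx n x - 1 := by
      by_contra hne
      exact halt j (by omega) hjn hjeq
    rw [(hword _ hjn).1, (hword _ hjn).2]
    exact hjeq

lemma Phi_eq_ite (x : Fin n → Bool) (i : Fin n) :
    Phi n x i = if (i : ℕ) < mIdx n x then !word x (mIdx n x - 1) else x i := by
  unfold Phi
  split_ifs
  · rw [word, dif_pos]
  · rfl

lemma Phi_eq_of_isAltOn (x : Fin n → Bool) (i : Fin n) (h : IsAltOn (word x) 0 i) :
    ∃ e, IsMaxAltRun (word x) n i e ∧ Phi n x i = !word x e := by
  have hrun := isMaxAltRun_mIdx i.pos x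
  have hiM : (i : ℕ) < mIdx n x := by
    by_contra hMi
    have := one_le_mIdx i.pos x
    exact hrun.not_isAltOn (by omega) i.isLt h
  exact ⟨_, hrun.mono (Nat.zero_le _) (by omega), by rw [Phi_eq_ite, if_pos hiM]⟩

lemma Phi_eq_of_not_isAltOn (x : Fin n → Bool) (i : Fin n) (h : ¬IsAltOn (word x) 0 i) :
    Phi n x i = x i := by
  have hiM : ¬(i : ℕ) < mIdx n x := fun hiM => h ((isMaxAltRun_mIdx i.pos x).isAltOn (by omega))
  rw [Phi_eq_ite, if_neg hiM]

end Phi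

theorem Phi_is_threshold_network_general (n : ℕ) :
    ∃ (w : Fin n → Fin n → ℝ) (θ : Fin n → ℝ),
      ∀ x : Fin n → Bool, ∀ i : Fin n,
        (Phi n x i = true ↔ θ i ≤ ∑ j : Fin n, w i j * (if x j then 1 else 0)) := by
  have hform : ∀ i : Fin n, ∃ S ∈ affineForms (Fin n), ∀ x, Phi n x i = true ↔ 0 ≤ S x := by
    intro i
    obtain ⟨L, hL, hLsel⟩ := exists_mem_affineForms_prefix (n := n) i
    obtain ⟨R, hR, hRrun⟩ := exists_mem_affineForms_runEnd i i.isLt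
    obtain ⟨S, hS, hSsel⟩ := exists_mem_affineForms_of_selects hL hR
    refine ⟨S, hS, fun x => hSsel x _ (hLsel x _ _ (fun halt => ?_) (fun hnalt => ?_))⟩
    · obtain ⟨e, he, hPhi⟩ := Phi_eq_of_isAltOn x i halt
      rw [hPhi, Bool.not_eq_true', hRrun x e he]
    · rw [Phi_eq_of_not_isAltOn x i hnalt, word_coe]
  choose S hS hPhi using hform
  choose w c hwc using fun i => exists_eq_of_mem_affineForms (hS i)
  refine ⟨w, fun i => -c i, fun x i => ?_⟩
  rw [hPhi, hwc, neg_le_iff_add_nonneg]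

/-- Every coordinate of `Φₙ` is a linear threshold function: there are real
weights `w_{i,j}` and thresholds `θᵢ` with `Φₙ(x)ᵢ = 1 ↔ Σⱼ w_{i,j} xⱼ ≥ θᵢ`. -/
theorem Phi_is_threshold_network (n : ℕ) (hn : 0 < n) :
    ∃ (w : Fin n → Fin n → ℝ) (θ : Fin n → ℝ),
      ∀ x : Fin n → Bool, ∀ i : Fin n,
        (Phi n x i = true ↔ θ i ≤ ∑ j : Fin n, w i j * (if x j then 1 else 0)) :=
  Phi_is_threshold_network_general n
end

section
/- For every positive integer n there exists a function Φ : {0,1}^n → {0,1}^n, each of whose n coordinates is a linear threshold function (with integer weights and thresholds), such that Φ has period 2^n; in particular, every subset of coordinates (state in {0,1}^n) occurs in the orbit of (0,…,0). -/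
/-!
Put `x_n = 0` and `c_j = x_j xor x_{j+1}`. Then `rmap x = Σ c_j 2^j` is a binary counter that `Phi`
advances by one modulo `2^n`: the alternating prefix of `x` is exactly the block of trailing ones
of `c`, and `Phi` clears it and sets the next digit. As there are `2^n` states, `rmap` is a
bijection onto `ZMod (2^n)`, so `Phi` is a single cycle through all states.

Each neuron is a threshold unit: for neuron `i`, the alternating sum `Σ_{j≤i} (-1)^{i-j} x_j`
reaches its extreme values exactly when `x_0, …, x_i` alternates, and the Fibonacci-weighted
tail `Σ_{j>i} F_{n-j} x_j`, compared with `F_{n-i}` or `F_{n-i-1}`, reads off the parity of the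
length of the alternating run that continues after `i`, which decides the new value of `x_i`.
-/

namespace ThresholdNetwork

open Finset Function Nat

section SingleCycle

variable {α : Type*} {N : ℕ} {f : α → α} {r : α → ZMod N}

theorem map_iterate_of_semiconj (hf : Semiconj r f (· + 1)) (t : ℕ) (a : α) :
    r (f^[t] a) = r a + t := by
  rw [(hf.iterate_right t).eq, add_right_iterate, nsmul_one]

theorem injective_of_semiconj [Fintype α] [NeZero N] (hcard : Fintype.card α = N)
    (hf : Semiconj r f (· + 1)) : Injective r := by
  obtain ⟨a⟩ : Nonempty α := Fintype.card_pos_iff.mp (hcard ▸ Nat.pos_of_neZero N)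
  have hsurj : Surjective r := fun z =>
    ⟨f^[(z - r a).val] a, by rw [map_iterate_of_semiconj hf, ZMod.natCast_zmod_val]; ring⟩
  exact ((Fintype.bijective_iff_surjective_and_card r).mpr ⟨hsurj, by simp [hcard]⟩).injective

theorem iterate_eq_self_iff_dvd (hf : Semiconj r f (· + 1)) (hr : Injective r) (t : ℕ)
    (a : α) : f^[t] a = a ↔ N ∣ t := by
  rw [← ZMod.natCast_eq_zero_iff, ← hr.eq_iff, map_iterate_of_semiconj hf, add_eq_left]

theorem exists_iterate_eq [NeZero N] (hf : Semiconj r f (· + 1)) (hr : Injective r)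
    (a b : α) : ∃ t, f^[t] a = b :=
  ⟨(r b - r a).val, hr <| by rw [map_iterate_of_semiconj hf, ZMod.natCast_zmod_val]; ring⟩

end SingleCycle

section Sequences

def toSeq {n : ℕ} (x : Fin n → Bool) (j : ℕ) : Bool :=
  if h : j < n then x ⟨j, h⟩ else false

def AltUpTo (X : ℕ → Bool) (i : ℕ) : Prop := ∀ j < i, X j ≠ X (j + 1)

def altRun (n : ℕ) (X : ℕ → Bool) (v : Bool) (p : ℕ) : ℕ :=
  if h : p < n ∧ X p ≠ v then altRun n X (X p) (p + 1) + 1 else 0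
termination_by n - p

def fibTail (n : ℕ) (X : ℕ → Bool) (p : ℕ) : ℕ :=
  ∑ j ∈ Ico p n, fib (n - j) * (if X j then 1 else 0)

def altSum (X : ℕ → Bool) (i : ℕ) : ℤ :=
  ∑ j ∈ range (i + 1), (-1) ^ (i - j) * (if X j then 1 else 0)

@[simp]
theorem toSeq_fin {n : ℕ} (x : Fin n → Bool) (i : Fin n) : toSeq x i = x i :=
  dif_pos i.isLt

theorem toSeq_of_lt {n : ℕ} (x : Fin n → Bool) {j : ℕ} (hj : j < n) :
    toSeq x j = x ⟨j, hj⟩ :=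
  dif_pos hj

theorem toSeq_of_le {n : ℕ} (x : Fin n → Bool) {j : ℕ} (hj : n ≤ j) : toSeq x j = false :=
  dif_neg (by omega)

theorem altUpTo_succ {X : ℕ → Bool} {i : ℕ} :
    AltUpTo X (i + 1) ↔ AltUpTo X i ∧ X i ≠ X (i + 1) :=
  Nat.forall_lt_succ_right

theorem eq_iff_even_sub_of_altUpTo {X : ℕ → Bool} {i k : ℕ} (h : AltUpTo X k)
    (hik : i ≤ k) :
    X k = X i ↔ Even (k - i) := by
  induction k with
  | zero => simp [show i = 0 by omega]
  | succ k ih =>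
    rcases hik.eq_or_lt with rfl | hik
    · simp
    obtain ⟨hk, hne⟩ := altUpTo_succ.mp h
    rw [show k + 1 - i = k - i + 1 by omega, Nat.even_add_one, ← ih hk (by omega)]
    revert hne
    cases X i <;> cases X k <;> cases X (k + 1) <;> simp

theorem fibTail_lt_and_even_altRun_iff (n : ℕ) (X : ℕ → Bool) (p : ℕ) :
    fibTail n X p < fib (n - p + 2) ∧
      (Even (altRun n X false p) ↔ fibTail n X p < fib (n - p + 1)) ∧
      (Even (altRun n X true p) ↔ fib (n - p) ≤ fibTail n X p) := by
  by_cases hp : p < n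
  · obtain ⟨k, hk⟩ : ∃ k, n - p = k + 1 := ⟨n - p - 1, by omega⟩
    obtain ⟨ih_lt, ih_false, ih_true⟩ := fibTail_lt_and_even_altRun_iff n X (p + 1)
    rw [show n - (p + 1) = k by omega] at ih_lt ih_false ih_true
    have hT : fibTail n X p = fib (k + 1) * (if X p then 1 else 0) + fibTail n X (p + 1) := by
      rw [fibTail, sum_eq_sum_Ico_succ_bot hp, hk]; rfl
    have hrun : ∀ v, altRun n X v p = if X p = v then 0 else altRun n X (X p) (p + 1) + 1 := by
      intro v; rw [altRun]; by_cases h : X p = v <;> simp [h, hp]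
    have h2 : fib (k + 2) = fib k + fib (k + 1) := fib_add_two
    have h3 : fib (k + 3) = fib (k + 1) + fib (k + 2) := fib_add_two
    rw [hk, show k + 1 + 2 = k + 3 from rfl, show k + 1 + 1 = k + 2 from rfl, hT, hrun, hrun]
    cases X p <;> simp [Nat.even_add_one, ih_false, ih_true] <;> omega
  · have hT : fibTail n X p = 0 := by simp [fibTail, Ico_eq_empty_of_le (not_lt.mp hp)]
    have hrun : ∀ v, altRun n X v p = 0 := fun v => by rw [altRun]; simp [hp]
    simp [hT, hrun, show n - p = 0 by omega]
termination_by n - p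

theorem altSum_succ (X : ℕ → Bool) (i : ℕ) :
    altSum X (i + 1) = (if X (i + 1) then 1 else 0) - altSum X i := by
  have : ∀ j ∈ range (i + 1), (-1 : ℤ) ^ (i + 1 - j) * (if X j then 1 else 0)
      = -((-1) ^ (i - j) * (if X j then 1 else 0)) := fun j hj => by
    rw [show i + 1 - j = i - j + 1 by have := mem_range.mp hj; omega, pow_succ]; ring
  rw [altSum, sum_range_succ, altSum, Nat.sub_self, pow_zero, one_mul, sum_congr rfl this,
    sum_neg_distrib]
  ring

theorem altSum_bounds (X : ℕ → Bool) (i : ℕ) :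
    (-(((i : ℤ) + 1) / 2) ≤ altSum X i ∧
      (altSum X i = -(((i : ℤ) + 1) / 2) ↔ AltUpTo X i ∧ X i = false)) ∧
    (altSum X i ≤ (i : ℤ) / 2 + 1 ∧
      (altSum X i = (i : ℤ) / 2 + 1 ↔ AltUpTo X i ∧ X i = true)) := by
  induction i with
  | zero =>
    have h0 : AltUpTo X 0 := fun j hj => absurd hj (Nat.not_lt_zero j)
    have hA : altSum X 0 = if X 0 then 1 else 0 := by
      rw [altSum, sum_range_one, Nat.sub_self, pow_zero, one_mul]
    cases hx : X 0 <;> simp [hA, hx, h0]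
  | succ i ih =>
    rw [altSum_succ, altUpTo_succ]
    by_cases ha : AltUpTo X i <;> cases hx : X (i + 1) <;> cases hxi : X i <;>
      simp [ha, hxi] at ih ⊢ <;> omega

theorem altRun_eq_of_lt {n m p : ℕ} {X : ℕ → Bool} (hmn : m ≤ n) (halt : AltUpTo X (m - 1))
    (hbreak : m < n → X (m - 1) = X m) (hp : p < m) :
    altRun n X (X p) (p + 1) = m - 1 - p := by
  rw [altRun]
  by_cases hp1 : p + 1 < m
  · rw [dif_pos ⟨by omega, (halt p (by omega)).symm⟩, altRun_eq_of_lt hmn halt hbreak hp1]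
    omega
  · rw [dif_neg]
    · omega
    rintro ⟨hpn, hne⟩
    obtain rfl : p = m - 1 := by omega
    exact hne (by rw [hbreak (by omega), Nat.sub_add_cancel (by omega)])
termination_by m - p

end Sequences

section Phi

variable {n : ℕ} (x : Fin n → Bool)

theorem mIdx_le : mIdx n x ≤ n := Nat.findGreatest_le n

theorem lt_mIdx_iff {i : ℕ} (hi : i < n) : i < mIdx n x ↔ AltUpTo (toSeq x) i := by
  have hP : AltPrefix n x (i + 1) ↔ AltUpTo (toSeq x) i := by
    refine ⟨fun h j hj => ?_, fun h j hj hn => ?_⟩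
    · rw [toSeq_of_lt x (by omega), toSeq_of_lt x (by omega)]
      exact h j (by omega) _
    · have := h j (by omega)
      rwa [toSeq_of_lt x (by omega), toSeq_of_lt x hn] at this
  have hP0 : AltPrefix n x 0 := fun j hj => absurd hj (by omega)
  rw [← hP, mIdx]
  exact ⟨fun h j hj hn => Nat.findGreatest_spec (zero_le n) hP0 j (by omega) hn,
    Nat.le_findGreatest hi⟩

theorem mIdx_pos (hn : 0 < n) : 0 < mIdx n x :=
  (lt_mIdx_iff x hn).mpr fun j hj => absurd hj (Nat.not_lt_zero j)

theorem altUpTo_mIdx_sub_one (hn : 0 < n) : AltUpTo (toSeq x) (mIdx n x - 1) :=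
  (lt_mIdx_iff x (by have := mIdx_le x; omega)).mp (by have := mIdx_pos x hn; omega)

theorem toSeq_mIdx_sub_one (h : mIdx n x < n) : toSeq x (mIdx n x - 1) = toSeq x (mIdx n x) := by
  have hm := mIdx_pos x (by omega)
  by_contra hne
  have := (lt_mIdx_iff x h).mpr
    (by rw [show mIdx n x = mIdx n x - 1 + 1 by omega] at hne ⊢
        exact altUpTo_succ.mpr ⟨altUpTo_mIdx_sub_one x (by omega), hne⟩)
  omega

theorem toSeq_Phi (j : ℕ) :
    toSeq (Phi n x) j = if j < mIdx n x then !toSeq x (mIdx n x - 1) else toSeq x j := by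
  have := mIdx_le x
  by_cases hj : j < n
  · rw [toSeq_of_lt _ hj, toSeq_of_lt x hj, toSeq_of_lt x (show mIdx n x - 1 < n by omega)]
    unfold Phi
    split_ifs <;> rfl
  · rw [if_neg (by omega), toSeq_of_le _ (not_lt.mp hj), toSeq_of_le _ (not_lt.mp hj)]

theorem toSeq_Phi_eq_true_iff_of_altUpTo {i : ℕ} (hi : i < n) (h : AltUpTo (toSeq x) i) :
    toSeq (Phi n x) i = true ↔
      (toSeq x i = false ↔ Even (altRun n (toSeq x) (toSeq x i) (i + 1))) := by
  have him := (lt_mIdx_iff x hi).mpr h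
  have halt := altUpTo_mIdx_sub_one x (by omega)
  rw [toSeq_Phi, if_pos him,
    altRun_eq_of_lt (mIdx_le x) halt (toSeq_mIdx_sub_one x) him,
    ← eq_iff_even_sub_of_altUpTo halt (by omega)]
  cases toSeq x i <;> cases toSeq x (mIdx n x - 1) <;> simp

theorem toSeq_Phi_of_not_altUpTo {i : ℕ} (hi : i < n) (h : ¬AltUpTo (toSeq x) i) :
    toSeq (Phi n x) i = toSeq x i := by
  rw [toSeq_Phi, if_neg (mt (lt_mIdx_iff x hi).mp h)]

end Phi

section Weights

def weight (n i j : ℕ) : ℤ :=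
  if j ≤ i then
    -(-1) ^ (i - j) * fib (n - i) + if j = i then (fib (n - i) * i + fib (n - i - 1) : ℤ) else 0
  else -fib (n - j)

def threshold (n i : ℕ) : ℤ := fib (n - i) * (((i : ℤ) + 1) / 2 - 1) + 1

theorem mul_half_add_mul_half (a : ℤ) (i : ℕ) :
    a * (((i : ℤ) + 1) / 2) + a * ((i : ℤ) / 2) = a * i := by
  rw [← mul_add, show ((i : ℤ) + 1) / 2 + (i : ℤ) / 2 = i by omega]

variable {n i : ℕ} (X : ℕ → Bool)

theorem sum_weight_mul (hi : i < n) :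
    ∑ j ∈ range n, weight n i j * (if X j then 1 else 0) =
      -fib (n - i) * altSum X i + (fib (n - i) * i + fib (n - i - 1)) * (if X i then 1 else 0)
        - fibTail n X (i + 1) := by
  rw [← sum_range_add_sum_Ico _ (show i + 1 ≤ n by omega)]
  have hlow : ∑ j ∈ range (i + 1), weight n i j * (if X j then 1 else 0) =
      -fib (n - i) * altSum X i + (fib (n - i) * i + fib (n - i - 1)) * (if X i then 1 else 0) := by
    have : ∀ j ∈ range (i + 1), weight n i j * (if X j then 1 else 0) =
        -fib (n - i) * ((-1) ^ (i - j) * (if X j then 1 else 0)) +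
          if j = i then (fib (n - i) * i + fib (n - i - 1) : ℤ) * (if X j then 1 else 0) else 0 :=
      fun j hj => by
        rw [weight, if_pos (Nat.lt_succ_iff.mp (mem_range.mp hj))]
        split_ifs <;> ring
    rw [sum_congr rfl this, sum_add_distrib, ← mul_sum, sum_ite_eq',
      if_pos (self_mem_range_succ i), altSum]
  have hhigh :
      ∑ j ∈ Ico (i + 1) n, weight n i j * (if X j then 1 else 0) = -fibTail n X (i + 1) := by
    rw [fibTail, Nat.cast_sum, ← sum_neg_distrib]
    refine sum_congr rfl fun j hj => ?_
    rw [weight, if_neg (by have := (mem_Ico.mp hj).1; omega)]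
    push_cast; ring
  rw [hlow, hhigh]; ring

theorem threshold_le_iff_of_altUpTo (hi : i < n) (h : AltUpTo X i) :
    threshold n i ≤ ∑ j ∈ range n, weight n i j * (if X j then 1 else 0) ↔
      (X i = false ↔ Even (altRun n X (X i) (i + 1))) := by
  obtain ⟨k, hk⟩ : ∃ k, n - i = k + 1 := ⟨n - i - 1, by omega⟩
  obtain ⟨-, h_false, h_true⟩ := fibTail_lt_and_even_altRun_iff n X (i + 1)
  obtain ⟨⟨-, h_min⟩, -, h_max⟩ := altSum_bounds X i
  rw [show n - (i + 1) = k by omega] at h_false h_true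
  rw [sum_weight_mul X hi, threshold, hk, show k + 1 - 1 = k by omega]
  cases hx : X i
  · rw [h_min.mpr ⟨h, hx⟩, h_false]
    simp only [Bool.false_eq_true, if_false, true_iff]
    constructor <;> intro <;> linarith
  · rw [h_max.mpr ⟨h, hx⟩, h_true]
    have := mul_half_add_mul_half (fib (k + 1) : ℤ) i
    simp only [if_true, mul_one, Bool.true_eq_false, false_iff, not_le]
    constructor <;> intro <;> linarith

theorem threshold_le_iff_of_not_altUpTo (hi : i < n) (h : ¬AltUpTo X i) :
    threshold n i ≤ ∑ j ∈ range n, weight n i j * (if X j then 1 else 0) ↔ X i = true := by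
  obtain ⟨k, hk⟩ : ∃ k, n - i = k + 1 := ⟨n - i - 1, by omega⟩
  have hT := (fibTail_lt_and_even_altRun_iff n X (i + 1)).1
  obtain ⟨⟨h_lb, h_min⟩, h_ub, h_max⟩ := altSum_bounds X i
  rw [show n - (i + 1) + 2 = k + 2 by omega, fib_add_two] at hT
  rw [sum_weight_mul X hi, threshold, hk, show k + 1 - 1 = k by omega]
  have hF : (0 : ℤ) ≤ fib (k + 1) := by positivity
  cases hx : X i
  · have hA : -(((i : ℤ) + 1) / 2) + 1 ≤ altSum X i :=
      Int.add_one_le_of_lt (lt_of_le_of_ne h_lb fun he => h (h_min.mp he.symm).1)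
    have := mul_le_mul_of_nonneg_left hA hF
    simp only [Bool.false_eq_true, if_false, mul_zero, add_zero, iff_false, not_le]
    linarith
  · have hA : altSum X i ≤ (i : ℤ) / 2 := by
      have := lt_of_le_of_ne h_ub fun he => h (h_max.mp he).1
      omega
    have := mul_le_mul_of_nonneg_left hA hF
    have := mul_half_add_mul_half (fib (k + 1) : ℤ) i
    simp only [if_true, mul_one, iff_true]
    linarith

end Weights

theorem Phi_eq_true_iff {n : ℕ} (x : Fin n → Bool) (i : Fin n) :
    Phi n x i = true ↔
      threshold n i ≤ ∑ j : Fin n, weight n i j * (if x j then 1 else 0) := by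
  have hsum : ∑ j : Fin n, weight n i j * (if x j then 1 else 0) =
      ∑ j ∈ range n, weight n i j * (if toSeq x j then 1 else 0) := by
    rw [← Fin.sum_univ_eq_sum_range]; simp only [toSeq_fin]
  rw [← toSeq_fin (Phi n x) i, hsum]
  by_cases h : AltUpTo (toSeq x) i
  · rw [toSeq_Phi_eq_true_iff_of_altUpTo x i.isLt h, threshold_le_iff_of_altUpTo _ i.isLt h]
  · rw [toSeq_Phi_of_not_altUpTo x i.isLt h, threshold_le_iff_of_not_altUpTo _ i.isLt h]

section BinaryCounter

def binVal (n : ℕ) (b : ℕ → Bool) : ℕ :=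
  ∑ j ∈ range n, (if b j then 1 else 0) * 2 ^ j

/-- If `b_k` is a one too, the carry leaves the top digit and vanishes modulo `2 ^ n`. -/
theorem binVal_add_one {n k : ℕ} {b b' : ℕ → Bool} (hk : k < n)
    (hlow : ∀ j < k, b j = true ∧ b' j = false) (hflip : b' k = !b k)
    (hhigh : ∀ j, k < j → b' j = b j) (hcarry : b k = true → k + 1 = n) :
    (binVal n b' : ZMod (2 ^ n)) = binVal n b + 1 := by
  have hsplit : ∀ c : ℕ → Bool, (binVal n c : ZMod (2 ^ n)) =
      ∑ j ∈ range k, (if c j then 1 else 0) * 2 ^ j + (if c k then 1 else 0) * 2 ^ k +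
        ∑ j ∈ Ico (k + 1) n, (if c j then 1 else 0) * 2 ^ j := by
    intro c
    rw [binVal, ← sum_range_add_sum_Ico _ hk, sum_range_succ]
    push_cast; rfl
  have hones : ∑ j ∈ range k, (if b j then 1 else 0) * (2 : ZMod (2 ^ n)) ^ j = 2 ^ k - 1 := by
    have hgeom := geom_sum_mul (2 : ZMod (2 ^ n)) k
    rw [show (2 : ZMod (2 ^ n)) - 1 = 1 by ring, mul_one] at hgeom
    rw [← hgeom]
    exact sum_congr rfl fun j hj => by simp [(hlow j (mem_range.mp hj)).1]
  have hzeros : ∑ j ∈ range k, (if b' j then 1 else 0) * (2 : ZMod (2 ^ n)) ^ j = 0 :=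
    sum_eq_zero fun j hj => by simp [(hlow j (mem_range.mp hj)).2]
  have hrest : ∑ j ∈ Ico (k + 1) n, (if b' j then 1 else 0) * (2 : ZMod (2 ^ n)) ^ j =
      ∑ j ∈ Ico (k + 1) n, (if b j then 1 else 0) * 2 ^ j :=
    sum_congr rfl fun j hj => by rw [hhigh j (mem_Ico.mp hj).1]
  rw [hsplit, hsplit, hones, hzeros, hrest, hflip]
  cases hb : b k
  · simp only [Bool.not_false, if_true, if_false, Bool.false_eq_true]
    ring
  · have : (2 : ZMod (2 ^ n)) ^ (k + 1) = 0 := by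
      rw [hcarry hb]; exact_mod_cast ZMod.natCast_self (2 ^ n)
    simp only [Bool.not_true, if_true, if_false, Bool.false_eq_true]
    linear_combination -this

theorem rmap_eq_binVal {n : ℕ} (x : Fin n → Bool) :
    rmap n x = binVal n fun j => xor (toSeq x j) (toSeq x (j + 1)) := by
  rw [rmap, binVal, ← Fin.sum_univ_eq_sum_range]
  refine sum_congr rfl fun j _ => ?_
  have : cbit n x j = xor (toSeq x j) (toSeq x (j + 1)) := by
    rw [cbit, toSeq_fin]
    split_ifs with h
    · rw [toSeq_of_lt x h]
    · rw [toSeq_of_le x (by omega), Bool.xor_false]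
  rw [this]

theorem rmap_Phi {n : ℕ} (x : Fin n → Bool) :
    (rmap n (Phi n x) : ZMod (2 ^ n)) = rmap n x + 1 := by
  rcases Nat.eq_zero_or_pos n with rfl | hn
  · exact Subsingleton.elim (α := ZMod 1) _ _
  have hm := mIdx_pos x hn
  have halt := altUpTo_mIdx_sub_one x hn
  rw [rmap_eq_binVal, rmap_eq_binVal]
  apply binVal_add_one (k := mIdx n x - 1) (by have := mIdx_le x; omega)
  · intro j hj
    rw [toSeq_Phi, toSeq_Phi, if_pos (by omega), if_pos (by omega), Bool.xor_self]
    exact ⟨by simpa using halt j hj, rfl⟩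
  · rw [toSeq_Phi, toSeq_Phi, if_pos (by omega), if_neg (by omega), Nat.sub_add_cancel hm,
      Bool.not_xor]
  · intro j hj
    rw [toSeq_Phi, toSeq_Phi, if_neg (by omega), if_neg (by omega)]
  · intro hb
    by_contra hmn
    rw [toSeq_mIdx_sub_one x (by have := mIdx_le x; omega), Nat.sub_add_cancel hm,
      Bool.xor_self] at hb
    exact Bool.false_ne_true hb

end BinaryCounter

end ThresholdNetwork

open ThresholdNetwork Function

theorem exists_threshold_network_full_period_general (n : ℕ) :
    ∃ Φ : (Fin n → Bool) → (Fin n → Bool),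
      (∃ (w : Fin n → Fin n → ℤ) (θ : Fin n → ℤ),
        ∀ x : Fin n → Bool, ∀ i : Fin n,
          (Φ x i = true ↔ θ i ≤ ∑ j : Fin n, w i j * (if x j then 1 else 0))) ∧
      IsLeast {t : ℕ | 0 < t ∧ ∃ s : Fin n → Bool, Φ^[t] s = s} (2 ^ n) ∧
      ∀ y : Fin n → Bool, ∃ t : ℕ, Φ^[t] (fun _ => false) = y := by
  have hr : Semiconj (fun x => (rmap n x : ZMod (2 ^ n))) (Phi n) (· + 1) := rmap_Phi
  have hinj := injective_of_semiconj (by simp) hr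
  refine ⟨Phi n, ⟨fun i j => weight n i j, fun i => threshold n i, Phi_eq_true_iff⟩,
    ⟨⟨by positivity, fun _ => false, (iterate_eq_self_iff_dvd hr hinj _ _).mpr dvd_rfl⟩,
      fun t ⟨ht, s, hs⟩ => Nat.le_of_dvd ht ((iterate_eq_self_iff_dvd hr hinj t s).mp hs)⟩,
    fun y => exists_iterate_eq hr hinj _ y⟩

/-- For every positive `n` there is a McCulloch–Pitts network on `n` neurons
(each coordinate a linear threshold function with integer weights and thresholds)
with period `2ⁿ`; in particular every state occurs in the orbit of `(0,…,0)`. -/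
theorem exists_threshold_network_full_period (n : ℕ) (hn : 0 < n) :
    ∃ Φ : (Fin n → Bool) → (Fin n → Bool),
      (∃ (w : Fin n → Fin n → ℤ) (θ : Fin n → ℤ),
        ∀ x : Fin n → Bool, ∀ i : Fin n,
          (Φ x i = true ↔ θ i ≤ ∑ j : Fin n, w i j * (if x j then 1 else 0))) ∧
      IsLeast {t : ℕ | 0 < t ∧ ∃ s : Fin n → Bool, Φ^[t] s = s} (2 ^ n) ∧
      ∀ y : Fin n → Bool, ∃ t : ℕ, Φ^[t] (fun _ => false) = y :=
  exists_threshold_network_full_period_general n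
end

section
/- With the weights w_{n,i,j} and thresholds θ_{n,i} defined recursively as in the construction, for all n ≥ 1 and all i = 1,…,n: Σ_{j ≢ n mod 2} w_{n,i,j} = θ_{n,i} and Σ_{j ≡ n mod 2} w_{n,i,j} = θ_{n,i} − 1. -/
/-! Write `S⁻ₙ f` and `S⁺ₙ f` for the sums of `f j` over `1 ≤ j ≤ n` with `j ≢ n`, resp.
`j ≡ n` (mod 2). Passing from `n` to `n + 1` swaps the two parity classes and adds `f (n + 1)`
to the second one: `S⁻ₙ₊₁ f = S⁺ₙ f` and `S⁺ₙ₊₁ f = S⁻ₙ f + f (n + 1)`. Hence the recursion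
for the row `w_{n+2,i,·}` turns its parity sums into those of the rows `w_{n+1,i,·}` and
`w_{n,i,·}`, and the identities propagate by two-step induction on `n`; the diagonal row
`i = n` is a direct count. -/

open Finset

section ParitySums

variable {M : Type*} [AddCommMonoid M]

def sumOppParity (n : ℕ) (f : ℕ → M) : M :=
  ∑ j ∈ (Icc 1 n).filter (fun j => j % 2 ≠ n % 2), f j

def sumSameParity (n : ℕ) (f : ℕ → M) : M :=
  ∑ j ∈ (Icc 1 n).filter (fun j => j % 2 = n % 2), f j

lemma Icc_one_succ (n : ℕ) : Icc 1 (n + 1) = insert (n + 1) (Icc 1 n) := by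
  ext j; simp only [mem_Icc, mem_insert]; omega

lemma sumOppParity_succ (n : ℕ) (f : ℕ → M) : sumOppParity (n + 1) f = sumSameParity n f := by
  rw [sumOppParity, sumSameParity, Icc_one_succ, filter_insert, if_neg (by omega)]
  exact sum_congr (filter_congr fun j _ => by omega) fun _ _ => rfl

lemma sumSameParity_succ (n : ℕ) (f : ℕ → M) :
    sumSameParity (n + 1) f = sumOppParity n f + f (n + 1) := by
  rw [sumOppParity, sumSameParity, Icc_one_succ, filter_insert, if_pos (by omega),
    sum_insert (by simp), add_comm]
  exact congrArg (· + f (n + 1)) (sum_congr (filter_congr fun j _ => by omega) fun _ _ => rfl)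

lemma sumOppParity_congr {n : ℕ} {f g : ℕ → M}
    (h : ∀ j, 1 ≤ j → j ≤ n → j % 2 ≠ n % 2 → f j = g j) :
    sumOppParity n f = sumOppParity n g :=
  sum_congr rfl fun j hj => by
    simp only [mem_filter, mem_Icc] at hj
    exact h j hj.1.1 hj.1.2 hj.2

lemma sumSameParity_congr {n : ℕ} {f g : ℕ → M}
    (h : ∀ j, 1 ≤ j → j ≤ n → j % 2 = n % 2 → f j = g j) :
    sumSameParity n f = sumSameParity n g :=
  sum_congr rfl fun j hj => by
    simp only [mem_filter, mem_Icc] at hj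
    exact h j hj.1.1 hj.1.2 hj.2

lemma sumOppParity_add (n : ℕ) (f g : ℕ → M) :
    sumOppParity n (f + g) = sumOppParity n f + sumOppParity n g :=
  sum_add_distrib

lemma sumSameParity_add (n : ℕ) (f g : ℕ → M) :
    sumSameParity n (f + g) = sumSameParity n f + sumSameParity n g :=
  sum_add_distrib

lemma sumOppParity_const_and_sumSameParity_const (n : ℕ) (c : M) :
    sumOppParity n (fun _ => c) = (n / 2) • c ∧
      sumSameParity n (fun _ => c) = ((n + 1) / 2) • c := by
  induction n with
  | zero => simp [sumOppParity, sumSameParity]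
  | succ n ih =>
    rw [sumOppParity_succ, sumSameParity_succ, ih.1, ih.2, ← succ_nsmul]
    exact ⟨rfl, by congr 1; omega⟩

end ParitySums

section Recursion

variable (n : ℕ) {i j : ℕ}

lemma wgt_diag_of_lt_of_parity_ne (hj : j < n + 2) (hp : j % 2 ≠ (n + 2) % 2) :
    wgt (n + 2) (n + 2) j = 1 := by
  rw [wgt, if_pos rfl, if_neg hj.ne, if_neg hp]

lemma wgt_diag_of_lt_of_parity_eq (hj : j < n + 2) (hp : j % 2 = (n + 2) % 2) :
    wgt (n + 2) (n + 2) j = -1 := by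
  simp [wgt, hj.ne, hp]

lemma wgt_diag_diag : wgt (n + 2) (n + 2) (n + 2) = n := by
  simp [wgt]

lemma wgt_subdiag_of_le (hj : j ≤ n) : wgt (n + 2) (n + 1) j = wgt (n + 1) (n + 1) j := by
  simp [wgt, show j ≠ n + 2 by omega, show j ≠ n + 1 by omega]

lemma wgt_subdiag_subdiag : wgt (n + 2) (n + 1) (n + 1) = wgt (n + 1) (n + 1) (n + 1) + 1 := by
  simp [wgt]

lemma wgt_subdiag_diag : wgt (n + 2) (n + 1) (n + 2) = -1 := by
  simp [wgt]

lemma wgt_of_le_of_le (hi : i ≤ n) (hj : j ≤ n) :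
    wgt (n + 2) i j = wgt (n + 1) i j + wgt n i j := by
  simp [wgt, show i ≠ n + 2 by omega, show i ≠ n + 1 by omega,
    show j ≠ n + 2 by omega, show j ≠ n + 1 by omega]

lemma wgt_of_le_succ (hi : i ≤ n) : wgt (n + 2) i (n + 1) = wgt (n + 1) i (n + 1) := by
  simp [wgt, show i ≠ n + 2 by omega, show i ≠ n + 1 by omega]

lemma wgt_of_le_diag (hi : i ≤ n) : wgt (n + 2) i (n + 2) = -1 := by
  simp [wgt, show i ≠ n + 2 by omega, show i ≠ n + 1 by omega]

lemma thr_diag : thr (n + 2) (n + 2) = ((n + 2) / 2 : ℕ) := by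
  simp [thr]

lemma thr_subdiag : thr (n + 2) (n + 1) = thr (n + 1) (n + 1) := by
  simp [thr]

lemma thr_of_le (hi : i ≤ n) : thr (n + 2) i = thr (n + 1) i + thr n i - 1 := by
  simp [thr, show i ≠ n + 2 by omega, show i ≠ n + 1 by omega]

end Recursion

def HasParitySums (n i : ℕ) : Prop :=
  sumOppParity n (wgt n i) = thr n i ∧ sumSameParity n (wgt n i) = thr n i - 1

lemma hasParitySums_one (i : ℕ) : HasParitySums 1 i := by
  simp [HasParitySums, sumOppParity, sumSameParity, wgt, thr, filter_singleton]

lemma hasParitySums_diag (n : ℕ) : HasParitySums (n + 2) (n + 2) := by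
  have hones : sumOppParity (n + 2) (wgt (n + 2) (n + 2)) = sumOppParity (n + 2) fun _ => 1 :=
    sumOppParity_congr fun j _ hj hp => wgt_diag_of_lt_of_parity_ne n (by omega) hp
  have hminus_ones :
      sumOppParity (n + 1) (wgt (n + 2) (n + 2)) = sumOppParity (n + 1) fun _ => -1 :=
    sumOppParity_congr fun j _ hj hp => wgt_diag_of_lt_of_parity_eq n (by omega) (by omega)
  constructor
  · rw [hones, (sumOppParity_const_and_sumSameParity_const _ _).1, thr_diag, nsmul_one]
  · rw [sumSameParity_succ, hminus_ones, (sumOppParity_const_and_sumSameParity_const _ _).1,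
      wgt_diag_diag, thr_diag, nsmul_eq_mul]
    push_cast
    omega

lemma hasParitySums_subdiag {n : ℕ} (h : HasParitySums (n + 1) (n + 1)) :
    HasParitySums (n + 2) (n + 1) := by
  have hagree : ∀ j, 1 ≤ j → j ≤ n → wgt (n + 2) (n + 1) j = wgt (n + 1) (n + 1) j :=
    fun j _ hj => wgt_subdiag_of_le n hj
  obtain ⟨hopp, hsame⟩ := h
  rw [sumOppParity_succ] at hopp
  rw [sumSameParity_succ] at hsame
  constructor
  · rw [sumOppParity_succ, sumSameParity_succ,
      sumOppParity_congr fun j h₁ h₂ _ => hagree j h₁ h₂, wgt_subdiag_subdiag, thr_subdiag]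
    linear_combination hsame
  · rw [sumSameParity_succ, sumOppParity_succ,
      sumSameParity_congr fun j h₁ h₂ _ => hagree j h₁ h₂, wgt_subdiag_diag, thr_subdiag]
    linear_combination hopp

lemma hasParitySums_of_le {n i : ℕ} (hi : i ≤ n) (h₁ : HasParitySums (n + 1) i)
    (h₀ : HasParitySums n i) : HasParitySums (n + 2) i := by
  have hsplit : ∀ j, 1 ≤ j → j ≤ n → wgt (n + 2) i j = (wgt (n + 1) i + wgt n i) j :=
    fun j _ hj => wgt_of_le_of_le n hi hj
  obtain ⟨hopp₁, hsame₁⟩ := h₁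
  obtain ⟨hopp₀, hsame₀⟩ := h₀
  rw [sumOppParity_succ] at hopp₁
  rw [sumSameParity_succ] at hsame₁
  constructor
  · rw [sumOppParity_succ, sumSameParity_succ,
      sumOppParity_congr fun j h₁ h₂ _ => hsplit j h₁ h₂, sumOppParity_add,
      wgt_of_le_succ n hi, thr_of_le n hi]
    linear_combination hsame₁ + hopp₀
  · rw [sumSameParity_succ, sumOppParity_succ,
      sumSameParity_congr fun j h₁ h₂ _ => hsplit j h₁ h₂, sumSameParity_add,
      wgt_of_le_diag n hi, thr_of_le n hi]
    linear_combination hopp₁ + hsame₀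

lemma hasParitySums {n i : ℕ} (hi : 1 ≤ i) (hin : i ≤ n) : HasParitySums n i := by
  induction n using Nat.strong_induction_on generalizing i with
  | _ n ih =>
    match n with
    | 0 => omega
    | 1 => exact hasParitySums_one i
    | n + 2 =>
      obtain hdiag | hsub | hle : i = n + 2 ∨ i = n + 1 ∨ i ≤ n := by omega
      · exact hdiag ▸ hasParitySums_diag n
      · exact hsub ▸ hasParitySums_subdiag (ih (n + 1) (by omega) (by omega) le_rfl)
      · exact hasParitySums_of_le hle (ih (n + 1) (by omega) hi (by omega))
          (ih n (by omega) hi hle)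

theorem wgt_parity_sums_general (n i : ℕ) (hi : 1 ≤ i) (hin : i ≤ n) :
    (∑ j ∈ (Finset.Icc 1 n).filter (fun j => j % 2 ≠ n % 2), wgt n i j) = thr n i ∧
    (∑ j ∈ (Finset.Icc 1 n).filter (fun j => j % 2 = n % 2), wgt n i j) =
      thr n i - 1 :=
  hasParitySums hi hin

/-- The parity sums of the recursively defined weights:
`Σ_{j ≢ n mod 2} w_{n,i,j} = θ_{n,i}` and `Σ_{j ≡ n mod 2} w_{n,i,j} = θ_{n,i} - 1`. -/
theorem wgt_parity_sums (n i : ℕ) (hn : 1 ≤ n) (hi : 1 ≤ i) (hin : i ≤ n) :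
    (∑ j ∈ (Finset.Icc 1 n).filter (fun j => j % 2 ≠ n % 2), wgt n i j) = thr n i ∧
    (∑ j ∈ (Finset.Icc 1 n).filter (fun j => j % 2 = n % 2), wgt n i j) =
      thr n i - 1 :=
  wgt_parity_sums_general n i hi hin
end

section
/- For all n ≥ 1 and i = 1,…,n, Σ_{j=1}^n w_{n,i,j} = 2θ_{n,i} − 1, and consequently each threshold function f_{n,i}(x) = H(Σ_j w_{n,i,j} x_j − θ_{n,i}) satisfies f_{n,i}(x̄) = 1 − f_{n,i}(x) for all x ∈ {0,1}^n, where x̄ is the bitwise complement of x. -/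
/-!
Unfolding the recursion for `wgt`, the row sums obey the same recursion as `2 * thr - 1`: the
last row is an alternating `±1` row followed by `n`, the penultimate row is the last row of
level `n + 1` with a `+1` on the diagonal and a trailing `-1`, and every other row is the sum of
the rows of the two previous levels with a trailing `-1`. Once `∑ w = 2θ - 1`, complementing `x`
sends the weighted sum `s` to `2θ - 1 - s`, and `θ ≤ 2θ - 1 - s ↔ s < θ` over `ℤ`.
-/

open Finset

lemma sum_Icc_sign_alternating (m : ℕ) :
    ∑ j ∈ Icc 1 m, (if j % 2 = (m + 1) % 2 then (-1 : ℤ) else 1) = (m % 2 : ℕ) := by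
  induction m using Nat.twoStepInduction with
  | zero => rfl
  | one => rfl
  | more m ih _ =>
    rw [sum_Icc_succ_top (by omega), sum_Icc_succ_top (by omega),
      if_pos (by omega), if_neg (by omega)]
    simp only [show (m + 2 + 1) % 2 = (m + 1) % 2 by omega, ih, Nat.add_mod_right]
    ring

lemma sum_wgt_last (n : ℕ) :
    ∑ j ∈ Icc 1 (n + 2), wgt (n + 2) (n + 2) j = 2 * thr (n + 2) (n + 2) - 1 := by
  have hrow : ∀ j ∈ Icc 1 (n + 1),
      wgt (n + 2) (n + 2) j = if j % 2 = (n + 1 + 1) % 2 then -1 else 1 := by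
    intro j hj
    rw [mem_Icc] at hj
    simp only [wgt, if_true, if_neg (show j ≠ n + 2 by omega)]
  rw [sum_Icc_succ_top (by omega), sum_congr rfl hrow, sum_Icc_sign_alternating]
  simp only [wgt, thr, if_true]
  omega

lemma sum_wgt_penultimate (n : ℕ) :
    ∑ j ∈ Icc 1 (n + 2), wgt (n + 2) (n + 1) j = ∑ j ∈ Icc 1 (n + 1), wgt (n + 1) (n + 1) j := by
  have hrow : ∀ j ∈ Icc 1 n, wgt (n + 2) (n + 1) j = wgt (n + 1) (n + 1) j := by
    intro j hj
    rw [mem_Icc] at hj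
    simp only [wgt, if_neg (show n + 1 ≠ n + 2 by omega), if_true,
      if_neg (show j ≠ n + 2 by omega), if_neg (show j ≠ n + 1 by omega)]
  rw [sum_Icc_succ_top (by omega), sum_Icc_succ_top (by omega), sum_Icc_succ_top (by omega),
    sum_congr rfl hrow]
  simp only [wgt, if_neg (show n + 1 ≠ n + 2 by omega), if_true]
  ring

lemma sum_wgt_of_le {n i : ℕ} (hi : i ≤ n) :
    ∑ j ∈ Icc 1 (n + 2), wgt (n + 2) i j =
      ∑ j ∈ Icc 1 (n + 1), wgt (n + 1) i j + ∑ j ∈ Icc 1 n, wgt n i j - 1 := by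
  have hrow : ∀ j ∈ Icc 1 n, wgt (n + 2) i j = wgt (n + 1) i j + wgt n i j := by
    intro j hj
    rw [mem_Icc] at hj
    simp only [wgt, if_neg (show i ≠ n + 2 by omega), if_neg (show i ≠ n + 1 by omega),
      if_neg (show j ≠ n + 2 by omega), if_neg (show j ≠ n + 1 by omega)]
  rw [sum_Icc_succ_top (by omega), sum_Icc_succ_top (by omega), sum_Icc_succ_top (by omega),
    sum_congr rfl hrow, sum_add_distrib]
  simp only [wgt, if_neg (show i ≠ n + 2 by omega), if_neg (show i ≠ n + 1 by omega), if_true,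
    if_neg (show n + 1 ≠ n + 2 by omega)]
  ring

theorem sum_wgt {n i : ℕ} (hi : 1 ≤ i) (hin : i ≤ n) :
    ∑ j ∈ Icc 1 n, wgt n i j = 2 * thr n i - 1 := by
  induction n using Nat.twoStepInduction generalizing i with
  | zero => omega
  | one => simp [wgt, thr]
  | more n ih₀ ih₁ =>
    obtain hi' | rfl | rfl : i ≤ n ∨ i = n + 1 ∨ i = n + 2 := by omega
    · rw [sum_wgt_of_le hi', ih₁ hi (by omega), ih₀ hi hi']
      simp only [thr, if_neg (show i ≠ n + 2 by omega), if_neg (show i ≠ n + 1 by omega)]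
      ring
    · rw [sum_wgt_penultimate, ih₁ hi le_rfl]
      simp only [thr, if_neg (show n + 1 ≠ n + 2 by omega), if_true]
    · exact sum_wgt_last n

lemma le_sum_not_iff_not_le_sum {ι : Type*} [Fintype ι] {w : ι → ℤ} {θ : ℤ}
    (hw : ∑ j, w j = 2 * θ - 1) (x : ι → Bool) :
    θ ≤ ∑ j, w j * (if !(x j) then 1 else 0) ↔ ¬ θ ≤ ∑ j, w j * (if x j then 1 else 0) := by
  have hsplit : ∑ j, w j * (if !(x j) then 1 else 0) + ∑ j, w j * (if x j then 1 else 0) =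
      ∑ j, w j := by
    rw [← sum_add_distrib]
    refine sum_congr rfl fun j _ => ?_
    cases x j <;> simp
  omega

lemma Fin.sum_univ_eq_sum_Icc_one {M : Type*} [AddCommMonoid M] (f : ℕ → M) (n : ℕ) :
    ∑ j : Fin n, f (j + 1) = ∑ j ∈ Icc 1 n, f j := by
  rw [Fin.sum_univ_eq_sum_range (fun j => f (j + 1)), range_eq_Ico, sum_Ico_add' f,
    zero_add, Ico_add_one_right_eq_Icc]

theorem wgt_sum_antisymmetric_general (n i : ℕ) (hi : 1 ≤ i) (hin : i ≤ n) :
    (∑ j ∈ Finset.Icc 1 n, wgt n i j) = 2 * thr n i - 1 ∧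
    ∀ x : Fin n → Bool,
      (thr n i ≤ ∑ j : Fin n, wgt n i ((j : ℕ) + 1) * (if !(x j) then 1 else 0) ↔
        ¬ thr n i ≤ ∑ j : Fin n, wgt n i ((j : ℕ) + 1) * (if x j then 1 else 0)) := by
  have hsum := sum_wgt hi hin
  refine ⟨hsum, le_sum_not_iff_not_le_sum ?_⟩
  rwa [Fin.sum_univ_eq_sum_Icc_one (wgt n i)]

/-- `Σ_{j=1}^n w_{n,i,j} = 2θ_{n,i} - 1`, and consequently the threshold function
`f_{n,i}` satisfies `f_{n,i}(x̄) = 1 - f_{n,i}(x)` for all `x ∈ {0,1}ⁿ`. -/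
theorem wgt_sum_antisymmetric (n i : ℕ) (hn : 1 ≤ n) (hi : 1 ≤ i) (hin : i ≤ n) :
    (∑ j ∈ Finset.Icc 1 n, wgt n i j) = 2 * thr n i - 1 ∧
    ∀ x : Fin n → Bool,
      (thr n i ≤ ∑ j : Fin n, wgt n i ((j : ℕ) + 1) * (if !(x j) then 1 else 0) ↔
        ¬ thr n i ≤ ∑ j : Fin n, wgt n i ((j : ℕ) + 1) * (if x j then 1 else 0)) :=
  wgt_sum_antisymmetric_general n i hi hin
end

section
/- The trajectory of (0,…,0) under Φ_{n+1} is obtained from the trajectory of (0,…,0) under Φ_n as follows: writing T for the sequence of 2^n vectors obtained by appending a 0 to each vector Φ_n^t(0,…,0) (t = 0,…,2^n−1), and T̄ for the sequence obtained by complementing every bit of every vector of T, the sequence Φ_{n+1}^t(0,…,0) for t = 0,…,2^{n+1}−1 equals the concatenation T followed by T̄. -/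
/-!
Write `⊥` for the zero vector and `x0` for `x` with a `0` appended. While `x0` is not
alternating, its longest alternating prefix is that of `x`, so `Φ_{n+1}` acts on it as `Φₙ`
acts on `x`. The only `x` with `x0` alternating is `altEnd1 n = …0101`, and the orbit of `⊥`
under `Φₙ` meets it for the first time at step `2ⁿ - 1`. One more step sends `(altEnd1 n)0` to
`⊤ = ⊥ᶜ`, and since `Φ` commutes with complementation the second half of the orbit is the
complement of the first. In particular `altEnd1 (n + 1) = ((altEnd1 n)0)ᶜ` is first reached at
step `2ⁿ⁺¹ - 1`, which is the first-hitting invariant carried through the induction on `n`.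
-/

theorem Nat.findGreatest_congr_of_le {P Q : ℕ → Prop} [DecidablePred P] [DecidablePred Q]
    {n : ℕ} (h : ∀ m ≤ n, P m ↔ Q m) : Nat.findGreatest P n = Nat.findGreatest Q n := by
  induction n with
  | zero => rfl
  | succ n ih =>
    rw [Nat.findGreatest_succ, Nat.findGreatest_succ, ih fun m hm => h m (by omega)]
    exact if_congr (h (n + 1) le_rfl) rfl rfl

section

variable {n : ℕ}

theorem altPrefix_snoc_iff {x : Fin n → Bool} {b : Bool} {m : ℕ} (hm : m ≤ n) :
    AltPrefix (n + 1) (Fin.snoc x b) m ↔ AltPrefix n x m := by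
  refine forall_congr' fun j => imp_congr_right fun hj => ?_
  have hjn : j + 1 < n := by omega
  simp [Fin.snoc, hjn, Nat.lt_of_succ_lt hjn]

theorem mIdx_snoc_of_not_altPrefix {x : Fin n → Bool} {b : Bool}
    (h : ¬AltPrefix (n + 1) (Fin.snoc x b) (n + 1)) :
    mIdx (n + 1) (Fin.snoc x b) = mIdx n x := by
  rw [mIdx, Nat.findGreatest_of_not h]
  exact Nat.findGreatest_congr_of_le fun m hm => altPrefix_snoc_iff hm

theorem Phi_snoc_of_not_altPrefix {x : Fin n → Bool} {b : Bool}
    (h : ¬AltPrefix (n + 1) (Fin.snoc x b) (n + 1)) :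
    Phi (n + 1) (Fin.snoc x b) = Fin.snoc (Phi n x) b := by
  have hm := mIdx_snoc_of_not_altPrefix h
  have hle : mIdx n x ≤ n := Nat.findGreatest_le n
  funext i
  refine Fin.lastCases ?_ (fun j => ?_) i
  · simp [Phi, hm, hle.not_gt]
  · simp only [Phi, hm, Fin.snoc_castSucc, Fin.val_castSucc]
    split_ifs
    · simp [Fin.snoc, show mIdx n x - 1 < n by omega]
    · rfl

theorem altPrefix_compl_iff {x : Fin n → Bool} {m : ℕ} :
    AltPrefix n xᶜ m ↔ AltPrefix n x m := by
  simp [AltPrefix]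

theorem mIdx_compl (x : Fin n → Bool) : mIdx n xᶜ = mIdx n x :=
  Nat.findGreatest_congr_of_le fun _ _ => altPrefix_compl_iff

theorem Phi_compl (x : Fin n → Bool) : Phi n xᶜ = (Phi n x)ᶜ := by
  funext i
  simp only [Phi, mIdx_compl, Pi.compl_apply]
  split_ifs <;> rfl

theorem commute_Phi_compl : Function.Commute (Phi n) compl := Phi_compl

theorem Phi_of_altPrefix_self {x : Fin (n + 1) → Bool} (h : AltPrefix (n + 1) x (n + 1)) :
    Phi (n + 1) x = fun _ => !x (Fin.last n) := by
  have hm : mIdx (n + 1) x = n + 1 := Nat.findGreatest_eq h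
  funext i
  simp [Phi, hm, Fin.last, Fin.is_le i]

theorem AltPrefix.eq_of_last_eq {x y : Fin (n + 1) → Bool} (hx : AltPrefix (n + 1) x (n + 1))
    (hy : AltPrefix (n + 1) y (n + 1)) (hlast : x (Fin.last n) = y (Fin.last n)) : x = y := by
  have key : ∀ k i (hi : i + k = n), x ⟨i, by omega⟩ = y ⟨i, by omega⟩ := by
    intro k
    induction k with
    | zero =>
      rintro i rfl
      exact hlast
    | succ k ih =>
      intro i hi
      rw [Bool.eq_not_iff.2 (hx i (by omega) (by omega)),
        Bool.eq_not_iff.2 (hy i (by omega) (by omega)), ih (i + 1) (by omega)]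
  funext i
  exact key (n - i) i (by omega)

theorem altPrefix_altEnd1 : AltPrefix n (altEnd1 n) n := by
  intro j _ _
  simp only [altEnd1, ne_eq, decide_eq_decide]
  omega

theorem snoc_altEnd1_false : Fin.snoc (altEnd1 n) false = (altEnd1 (n + 1))ᶜ := by
  funext i
  refine Fin.lastCases ?_ (fun j => ?_) i
  · simp [altEnd1]
  · simp only [altEnd1, Fin.snoc_castSucc, Fin.val_castSucc, Pi.compl_apply,
      Bool.compl_eq_bnot, ← decide_not, decide_eq_decide]
    omega

theorem altPrefix_snoc_altEnd1_false :
    AltPrefix (n + 1) (Fin.snoc (altEnd1 n) false) (n + 1) := by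
  rw [snoc_altEnd1_false]
  exact altPrefix_compl_iff.2 altPrefix_altEnd1

theorem eq_altEnd1_of_altPrefix_snoc_false {x : Fin n → Bool}
    (h : AltPrefix (n + 1) (Fin.snoc x false) (n + 1)) : x = altEnd1 n :=
  (Fin.snoc_injective2 (h.eq_of_last_eq altPrefix_snoc_altEnd1_false (by simp))).1

theorem Phi_snoc_altEnd1_false : Phi (n + 1) (Fin.snoc (altEnd1 n) false) = ⊤ := by
  rw [Phi_of_altPrefix_self altPrefix_snoc_altEnd1_false, Fin.snoc_last]
  rfl

theorem iterate_Phi_snoc {x : Fin n → Bool} {b : Bool} {k : ℕ}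
    (h : ∀ s < k, ¬AltPrefix (n + 1) (Fin.snoc ((Phi n)^[s] x) b) (n + 1)) :
    (Phi (n + 1))^[k] (Fin.snoc x b) = Fin.snoc ((Phi n)^[k] x) b := by
  induction k with
  | zero => rfl
  | succ k ih =>
    rw [Function.iterate_succ_apply', ih fun s hs => h s (by omega),
      Phi_snoc_of_not_altPrefix (h k (by omega)), Function.iterate_succ_apply']

theorem iterate_Phi_succ_bot_of_ne {k : ℕ} (h : ∀ s < k, (Phi n)^[s] ⊥ ≠ altEnd1 n) :
    (Phi (n + 1))^[k] ⊥ = Fin.snoc ((Phi n)^[k] ⊥) false := by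
  have hbot : (⊥ : Fin (n + 1) → Bool) = Fin.snoc ⊥ false := by
    funext i
    refine Fin.lastCases ?_ (fun j => ?_) i <;> simp
  rw [hbot]
  exact iterate_Phi_snoc fun s hs hs' => h s hs (eq_altEnd1_of_altPrefix_snoc_false hs')

theorem iterate_Phi_succ_bot
    (hhit : ∀ t < 2 ^ n, ((Phi n)^[t] ⊥ = altEnd1 n ↔ t = 2 ^ n - 1))
    {t : ℕ} (ht : t < 2 ^ (n + 1)) :
    (Phi (n + 1))^[t] ⊥ =
      if t < 2 ^ n then Fin.snoc ((Phi n)^[t] ⊥) false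
      else (Fin.snoc ((Phi n)^[t - 2 ^ n] ⊥) false)ᶜ := by
  have hpos : 0 < 2 ^ n := Nat.two_pow_pos n
  have hfirst : ∀ s < 2 ^ n - 1, (Phi n)^[s] ⊥ ≠ altEnd1 n := fun s hs h => by
    have := (hhit s (by omega)).1 h
    omega
  split_ifs with h
  · exact iterate_Phi_succ_bot_of_ne fun s hs => hfirst s (by omega)
  · have hhalf : (Phi (n + 1))^[2 ^ n] ⊥ = ⊤ := by
      rw [← Nat.sub_add_cancel hpos, Function.iterate_succ_apply',
        iterate_Phi_succ_bot_of_ne hfirst, (hhit _ (by omega)).2 rfl, Phi_snoc_altEnd1_false]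
    have hrest : t - 2 ^ n < 2 ^ n := by rw [pow_succ] at ht; omega
    rw [← Nat.sub_add_cancel (not_lt.1 h), Function.iterate_add_apply, hhalf, ← compl_bot,
      commute_Phi_compl.iterate_left, iterate_Phi_succ_bot_of_ne fun s hs => hfirst s (by omega),
      Nat.add_sub_cancel]

end

theorem iterate_Phi_bot_eq_altEnd1_iff (n : ℕ) {t : ℕ} (ht : t < 2 ^ n) :
    (Phi n)^[t] ⊥ = altEnd1 n ↔ t = 2 ^ n - 1 := by
  induction n generalizing t with
  | zero =>
    obtain rfl : t = 0 := by simpa using ht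
    exact iff_of_true (Subsingleton.elim _ _) rfl
  | succ n ih =>
    rw [iterate_Phi_succ_bot (fun s hs => ih hs) ht]
    rw [pow_succ] at ht ⊢
    split_ifs with h
    · refine iff_of_false (fun heq => ?_) (by omega)
      simpa [altEnd1] using congrFun heq (Fin.last n)
    · rw [compl_eq_comm, ← snoc_altEnd1_false, Fin.snoc_inj, eq_comm, ih (by omega),
        and_iff_left rfl]
      omega

theorem Phi_succ_trajectory_general (n : ℕ) (t : ℕ) (ht : t < 2 ^ (n + 1)) :
    (Phi (n + 1))^[t] (fun _ => false) =
      if t < 2 ^ n then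
        Fin.snoc ((Phi n)^[t] (fun _ => false)) false
      else
        fun i => ! ((Fin.snoc ((Phi n)^[t - 2 ^ n] (fun _ => false)) false : Fin (n + 1) → Bool) i) :=
  iterate_Phi_succ_bot (fun _ hs => iterate_Phi_bot_eq_altEnd1_iff n hs) ht

/-- The trajectory of `(0,…,0)` under `Φ_{n+1}` is the concatenation `T T̄`, where
`T` appends a `0` to each point of the trajectory of `(0,…,0)` under `Φₙ` and `T̄`
complements every bit of every vector of `T`. -/
theorem Phi_succ_trajectory (n : ℕ) (hn : 0 < n) (t : ℕ) (ht : t < 2 ^ (n + 1)) :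
    (Phi (n + 1))^[t] (fun _ => false) =
      if t < 2 ^ n then
        Fin.snoc ((Phi n)^[t] (fun _ => false)) false
      else
        fun i => ! ((Fin.snoc ((Phi n)^[t - 2 ^ n] (fun _ => false)) false : Fin (n + 1) → Bool) i) :=
  Phi_succ_trajectory_general n t ht
end

section
/- For every x ∈ {0,1}^n and every i with 2 ≤ i ≤ n, if x_i ≠ Φ_n(x)_i then Φ_n(x)_i = Φ_n^2(x)_i. -/
/- If `xᵢ ≠ Φ(x)ᵢ` then `i` lies in the maximal alternating prefix of `x`, which therefore has
length `m ≥ 2`. Φ makes the first `m` bits of `x` all equal, so the maximal alternating prefix of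
`Φ(x)` has length at most `1`, and the second application of Φ leaves bit `i ≥ 2` untouched. -/

theorem Phi_apply_of_mIdx_le {n : ℕ} {x : Fin n → Bool} {i : Fin n} (hi : mIdx n x ≤ i) :
    Phi n x i = x i := by
  simp [Phi, Nat.not_lt.mpr hi]

theorem lt_mIdx_of_apply_ne_Phi {n : ℕ} {x : Fin n → Bool} {i : Fin n}
    (h : x i ≠ Phi n x i) : (i : ℕ) < mIdx n x :=
  Nat.lt_of_not_le fun hi => h (Phi_apply_of_mIdx_le hi).symm

theorem Phi_apply_eq_of_lt_mIdx {n : ℕ} {x : Fin n → Bool} {i j : Fin n}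
    (hi : (i : ℕ) < mIdx n x) (hj : (j : ℕ) < mIdx n x) : Phi n x i = Phi n x j := by
  simp only [Phi, dif_pos hi, dif_pos hj]

theorem mIdx_le_one_of_apply_eq {n : ℕ} {x : Fin n → Bool} (hn : 1 < n)
    (h : x ⟨0, Nat.zero_lt_of_lt hn⟩ = x ⟨1, hn⟩) : mIdx n x ≤ 1 := by
  by_contra! hm
  have halt : AltPrefix n x (mIdx n x) :=
    Nat.findGreatest_spec (Nat.zero_le n) fun j hj _ => absurd hj (Nat.not_lt_zero _)
  exact halt 0 hm hn h

/-- For every `x ∈ {0,1}ⁿ` and every `i` with `2 ≤ i ≤ n` (1-indexed):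
if `xᵢ ≠ Φₙ(x)ᵢ` then `Φₙ(x)ᵢ = Φₙ²(x)ᵢ`. -/
theorem Phi_later_bits (n : ℕ) (x : Fin n → Bool) (i : Fin n) (hi : 1 ≤ (i : ℕ))
    (h : x i ≠ Phi n x i) :
    Phi n x i = Phi n (Phi n x) i := by
  have him : (i : ℕ) < mIdx n x := lt_mIdx_of_apply_ne_Phi h
  have hn : 1 < n := lt_of_le_of_lt hi i.isLt
  have hPhi : mIdx n (Phi n x) ≤ 1 :=
    mIdx_le_one_of_apply_eq hn
      (Phi_apply_eq_of_lt_mIdx (show 0 < mIdx n x by omega) (show 1 < mIdx n x by omega))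
  exact (Phi_apply_of_mIdx_le (hPhi.trans hi)).symm
end
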